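/- arXiv:math/0103092 — 4 statements merged into one kernel-verified Lean document; each statement's English description precedes it below -/
import Mathlib

section
/- Let k be a field, let M be a vector space over k, and let 𝔤 : ℤ → Submodule k (Module.End k M) be a family of subspaces of linear endomorphisms of M satisfying: for all i, j ∈ ℤ and all x ∈ 𝔤 i, y ∈ 𝔤 j there exists a scalar c ∈ k such that x ∘ y - c • (y ∘ x) ∈ 𝔤 (i + j). Let v ∈ M be such that for every j ∈ ℤ the subspace span_k { x v : x ∈ 𝔤 j } is finite-dimensional. Then for every n ∈ ℕ, the subspace of M spanned by the union, over all m ≥ 1 and all tuples (i₁, …, i_m) of positive integers with i₁ + ⋯ + i_m = n, of the sets { x₁ (x₂ (⋯ (x_m v)⋯)) : x_k ∈ 𝔤 (-i_k) for all k }, is finite-dimensional. -/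
section Aux

variable {k : Type*} [Field k] {M : Type*} [AddCommGroup M] [Module k M]

/-- A finite-dimensional span of a set is the span of a finite subset. -/
lemma aux_span_finite_subset (s : Set M) [FiniteDimensional k (Submodule.span k s)] :
    ∃ t : Set M, t.Finite ∧ t ⊆ s ∧ Submodule.span k t = Submodule.span k s := by
  classical
  obtain ⟨g, hg⟩ := (Submodule.fg_iff_finiteDimensional (Submodule.span k s)).mpr ‹_›
  have hx : ∀ x ∈ g, ∃ T : Finset M, ↑T ⊆ s ∧ x ∈ Submodule.span k (T : Set M) := by
    intro x hxg
    exact Submodule.mem_span_finite_of_mem_span (by rw [← hg]; exact Submodule.subset_span hxg)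
  choose! T hT1 hT2 using hx
  refine ⟨⋃ x ∈ g, (T x : Set M), ?_, ?_, le_antisymm ?_ ?_⟩
  · exact Set.Finite.biUnion g.finite_toSet fun x _ => (T x).finite_toSet
  · exact Set.iUnion₂_subset fun x hxg => hT1 x hxg
  · exact Submodule.span_mono (Set.iUnion₂_subset fun x hxg => hT1 x hxg) |>.trans le_rfl
  · rw [← hg]
    refine Submodule.span_le.mpr ?_
    intro x hxg
    exact Submodule.span_mono (Set.subset_iUnion₂ x hxg) (hT2 x hxg)

lemma aux_fd_finset_sup {ι : Type*} (s : Finset ι) (f : ι → Submodule k M)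
    (h : ∀ i ∈ s, FiniteDimensional k (f i)) : FiniteDimensional k ↥(s.sup f) := by
  classical
  induction s using Finset.induction_on with
  | empty => rw [Finset.sup_empty]; exact (inferInstance : FiniteDimensional k (⊥ : Submodule k M))
  | @insert a s ha ih =>
    rw [Finset.sup_insert]
    haveI := h a (Finset.mem_insert_self a s)
    haveI := ih fun i hi => h i (Finset.mem_insert_of_mem hi)
    exact Submodule.finiteDimensional_sup _ _

end Aux

section Main

variable (k : Type*) [Field k] (M : Type*) [AddCommGroup M] [Module k M]
  (𝔤 : ℤ → Submodule k (Module.End k M)) (v : M)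

/-- The degree-`n` set of monomial vectors. -/
def monSet (n : ℕ) : Set M :=
  {w : M |
    ∃ (m : ℕ) (i : Fin m → ℤ) (x : Fin m → Module.End k M),
      1 ≤ m ∧ (∀ l, 0 < i l) ∧ (∑ l, i l) = (n : ℤ) ∧
      (∀ l, x l ∈ 𝔤 (-(i l))) ∧
      w = (List.ofFn x).foldr (fun f u => f u) v}

variable {k M 𝔤 v}

variable
  (hbracket : ∀ i j : ℤ, ∀ x ∈ 𝔤 i, ∀ y ∈ 𝔤 j, ∃ c : k,
      x * y - c • (y * x) ∈ 𝔤 (i + j))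
  (hfin : ∀ j : ℤ, FiniteDimensional k
      (Submodule.span k {w : M | ∃ x ∈ 𝔤 j, w = x v}))

include hbracket hfin in
/-- Lemma A: applying `𝔤 j` to a fixed monomial gives a finite-dimensional span. -/
lemma lemA : ∀ (L : List (Module.End k M)), (∀ x ∈ L, ∃ d, x ∈ 𝔤 d) →
    ∀ j : ℤ, FiniteDimensional k
      (Submodule.span k {w : M | ∃ y ∈ 𝔤 j, w = y (L.foldr (fun f u => f u) v)}) := by
  intro L
  induction L with
  | nil => intro _ j; exact hfin j
  | cons x₀ L ih =>
    intro hL j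
    obtain ⟨d₀, hx₀⟩ := hL x₀ List.mem_cons_self
    have hL' : ∀ x ∈ L, ∃ d, x ∈ 𝔤 d := fun x hx => hL x (List.mem_cons_of_mem _ hx)
    set u' := L.foldr (fun f u => f u) v with hu'
    haveI h1 := ih hL' j
    haveI h2 := ih hL' (j + d₀)
    set A := Submodule.map x₀ (Submodule.span k {w : M | ∃ y ∈ 𝔤 j, w = y u'}) ⊔
      Submodule.span k {w : M | ∃ y ∈ 𝔤 (j + d₀), w = y u'} with hA
    haveI : FiniteDimensional k A := by
      apply Submodule.finiteDimensional_sup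
    apply Submodule.finiteDimensional_of_le (S₂ := A)
    rw [Submodule.span_le]
    rintro w ⟨y, hy, rfl⟩
    obtain ⟨c, hz⟩ := hbracket j d₀ y hy x₀ hx₀
    have key : y ((x₀ :: L).foldr (fun f u => f u) v) =
        (y * x₀ - c • (x₀ * y)) u' + c • (x₀ (y u')) := by
      simp [Module.End.mul_apply, LinearMap.sub_apply, LinearMap.smul_apply, hu']
    rw [key]
    apply Submodule.add_mem
    · exact Submodule.mem_sup_right (Submodule.subset_span ⟨_, hz, rfl⟩)
    · refine Submodule.smul_mem _ c (Submodule.mem_sup_left ?_)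
      exact ⟨y u', Submodule.subset_span ⟨y, hy, rfl⟩, rfl⟩

set_option maxHeartbeats 1000000 in
set_option synthInstance.maxHeartbeats 400000 in
include hbracket hfin in
/-- Lemma B: the degree-`n` piece is spanned by finitely many monomials. -/
lemma lemB : ∀ n : ℕ, ∃ t : Set M, t.Finite ∧ t ⊆ monSet k M 𝔤 v n ∧
    Submodule.span k t = Submodule.span k (monSet k M 𝔤 v n) := by
  intro n
  induction n using Nat.strong_induction_on with
  | _ n ih =>
  match n with
  | 0 =>
    have hempty : monSet k M 𝔤 v 0 = (∅ : Set M) := by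
      ext w
      simp only [Set.mem_empty_iff_false, iff_false]
      rintro ⟨m, i, x, hm, hpos, hsum, -, -⟩
      haveI : Nonempty (Fin m) := ⟨⟨0, hm⟩⟩
      have : (0 : ℤ) < ∑ l, i l := Finset.sum_pos (fun l _ => hpos l) Finset.univ_nonempty
      omega
    exact ⟨∅, Set.finite_empty, by simp [hempty], by rw [hempty]⟩
  | (n + 1) =>
    classical
    set N : ℕ := n + 1 with hN
    have ihall : ∀ r : ℕ, ∃ s : Set M, s.Finite ∧ (r < N → s ⊆ monSet k M 𝔤 v r ∧
        Submodule.span k s = Submodule.span k (monSet k M 𝔤 v r)) := by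
      intro r
      by_cases h : r < N
      · obtain ⟨s, hs1, hs2, hs3⟩ := ih r h
        exact ⟨s, hs1, fun _ => ⟨hs2, hs3⟩⟩
      · exact ⟨∅, Set.finite_empty, fun hc => absurd hc h⟩
    choose t h1 hcond using ihall
    have h2 : ∀ r, r < N → t r ⊆ monSet k M 𝔤 v r := fun r h => (hcond r h).1
    have h3 : ∀ r, r < N → Submodule.span k (t r) = Submodule.span k (monSet k M 𝔤 v r) :=
      fun r h => (hcond r h).2
    set U : Set M := {w : M | ∃ y ∈ 𝔤 (-(N : ℤ)), w = y v} ∪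
        ⋃ r ∈ Finset.Icc 1 n, ⋃ u ∈ t r, {w : M | ∃ y ∈ 𝔤 ((r : ℤ) - N), w = y u} with hU
    -- (c) U ⊆ monSet N
    have hUsub : U ⊆ monSet k M 𝔤 v N := by
      rintro w (⟨y, hy, rfl⟩ | hw)
      · refine ⟨1, fun _ => (N : ℤ), fun _ => y, le_refl 1, fun _ => show (0:ℤ) < (N:ℤ) from by exact_mod_cast Nat.succ_pos n,
          by simp, fun _ => by simpa using hy, ?_⟩
        simp [List.ofFn_succ]
      · simp only [Set.mem_iUnion] at hw
        obtain ⟨r, hr, u, hu, y, hy, rfl⟩ := hw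
        simp only [Finset.mem_Icc] at hr
        have hrN : r < N := by omega
        obtain ⟨m, i, x, hm, hpos, hsum, hmem, hwu⟩ := h2 r hrN hu
        refine ⟨m + 1, Fin.cons ((N : ℤ) - r) i, Fin.cons y x, by omega, ?_, ?_, ?_, ?_⟩
        · intro l
          refine Fin.cases ?_ ?_ l
          · simp only [Fin.cons_zero]
            have : (r : ℤ) < N := by exact_mod_cast hrN
            omega
          · intro p; simpa using hpos p
        · rw [Fin.sum_cons, hsum]; ring
        · intro l
          refine Fin.cases ?_ ?_ l
          · simpa [neg_sub] using hy
          · intro p; simpa using hmem p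
        · have : List.ofFn (Fin.cons y x : Fin (m + 1) → Module.End k M) = y :: List.ofFn x := by
            rw [List.ofFn_succ]
            simp
          rw [this, List.foldr_cons, hwu]
    -- (a) monSet N ⊆ span U
    have hMsub : monSet k M 𝔤 v N ⊆ (Submodule.span k U : Set M) := by
      rintro w ⟨m, i, x, hm, hpos, hsum, hmem, rfl⟩
      obtain ⟨m', rfl⟩ : ∃ m', m = m' + 1 := ⟨m - 1, by omega⟩
      rw [List.ofFn_succ, List.foldr_cons]
      rcases m' with _ | m''
      · have hi0 : i 0 = (N : ℤ) := by rw [← hsum, Fin.sum_univ_one]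
        have hv : List.foldr (fun f u => f u) v (List.ofFn fun l : Fin 0 => x l.succ) = v := by
          simp
        rw [hv]
        exact Submodule.subset_span (Or.inl ⟨x 0, by rw [← hi0]; exact hmem 0, rfl⟩)
      · set u' := List.foldr (fun f u => f u) v (List.ofFn fun l : Fin (m'' + 1) => x l.succ)
          with hu'
        set s : ℤ := ∑ l : Fin (m'' + 1), i l.succ with hs
        have hsum' : i 0 + s = (N : ℤ) := by rw [← hsum, Fin.sum_univ_succ]
        have hspos : 0 < s := Finset.sum_pos (fun l _ => hpos l.succ) Finset.univ_nonempty
        set r : ℕ := s.toNat with hr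
        have hrs : (r : ℤ) = s := Int.toNat_of_nonneg hspos.le
        have hrN : r < N := by have := hpos 0; omega
        have hr1 : 1 ≤ r := by omega
        have hu'mem : u' ∈ monSet k M 𝔤 v r :=
          ⟨m'' + 1, fun l => i l.succ, fun l => x l.succ, Nat.le_add_left 1 m'',
            fun l => hpos l.succ, by rw [← hs, hrs], fun l => hmem l.succ, rfl⟩
        have hu'span : u' ∈ Submodule.span k (t r) := by
          rw [h3 r hrN]
          exact Submodule.subset_span hu'mem
        have himg : x 0 u' ∈ Submodule.map (x 0) (Submodule.span k (t r)) :=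
          ⟨u', hu'span, rfl⟩
        rw [Submodule.map_span] at himg
        refine Submodule.span_mono ?_ himg
        rintro w' ⟨u, hu, rfl⟩
        refine Or.inr ?_
        simp only [Set.mem_iUnion]
        refine ⟨r, Finset.mem_Icc.mpr ⟨hr1, by omega⟩, u, hu, x 0, ?_, rfl⟩
        have : -(i 0) = (r : ℤ) - N := by omega
        rw [← this]; exact hmem 0
    -- (b) span U is finite-dimensional
    haveI hfd : FiniteDimensional k (Submodule.span k U) := by
      set f : ℕ → Submodule k M := fun r =>
        ((h1 r).toFinset).sup
          (fun u => Submodule.span k {w : M | ∃ y ∈ 𝔤 ((r : ℤ) - N), w = y u}) with hf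
      set F : Submodule k M :=
        Submodule.span k {w : M | ∃ y ∈ 𝔤 (-(N : ℤ)), w = y v} ⊔ (Finset.Icc 1 n).sup f with hF
      haveI : FiniteDimensional k ↥F := by
        haveI : FiniteDimensional k ↥((Finset.Icc 1 n).sup f) := by
          apply aux_fd_finset_sup
          intro r hrI
          simp only [Finset.mem_Icc] at hrI
          have hrN : r < N := by omega
          rw [hf]
          apply aux_fd_finset_sup
          intro u hu
          rw [Set.Finite.mem_toFinset] at hu
          obtain ⟨m, i, x, hm, hpos, hsum, hmem, hwu⟩ := h2 r hrN hu
          rw [hwu]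
          exact lemA hbracket hfin (List.ofFn x)
            (fun e he => by
              obtain ⟨l, rfl⟩ := List.mem_ofFn.mp he
              exact ⟨-(i l), hmem l⟩) ((r : ℤ) - N)
        haveI := hfin (-(N : ℤ))
        exact Submodule.finiteDimensional_sup _ _
      apply Submodule.finiteDimensional_of_le (S₂ := F)
      rw [Submodule.span_le]
      rintro w (hw | hw)
      · exact Submodule.mem_sup_left (Submodule.subset_span hw)
      · simp only [Set.mem_iUnion] at hw
        obtain ⟨r, hrI, u, hu, hw⟩ := hw
        apply Submodule.mem_sup_right
        simp only [Finset.mem_Icc] at hrI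
        have hrN : r < N := by omega
        refine SetLike.le_def.mp (Finset.le_sup (Finset.mem_Icc.mpr hrI)) ?_
        rw [hf]
        refine SetLike.le_def.mp
          (Finset.le_sup (f := fun u => Submodule.span k
            {w : M | ∃ y ∈ 𝔤 ((r : ℤ) - N), w = y u})
            ((Set.Finite.mem_toFinset _).mpr hu)) ?_
        exact Submodule.subset_span hw
    -- conclude
    obtain ⟨t', ht'fin, ht'sub, ht'span⟩ := aux_span_finite_subset (k := k) U
    have hspaneq : Submodule.span k U = Submodule.span k (monSet k M 𝔤 v N) :=
      le_antisymm (Submodule.span_mono hUsub)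
        (Submodule.span_le.mpr hMsub)
    exact ⟨t', ht'fin, fun a ha => hUsub (ht'sub ha), by rw [ht'span, hspaneq]⟩

end Main

/-- Proposition 5.1: quasifiniteness of the graded pieces of the highest weight module.
The degree-`n` piece, spanned by vectors `x₁ (x₂ (⋯ (x_m v)⋯))` with `x_l ∈ 𝔤 (-i_l)`,
`i_l > 0` and `i₁ + ⋯ + i_m = n`, is finite-dimensional. -/
theorem quasifinite_graded_piece
    (k : Type*) [Field k] (M : Type*) [AddCommGroup M] [Module k M]
    (𝔤 : ℤ → Submodule k (Module.End k M))
    (hbracket : ∀ i j : ℤ, ∀ x ∈ 𝔤 i, ∀ y ∈ 𝔤 j, ∃ c : k,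
      x * y - c • (y * x) ∈ 𝔤 (i + j))
    (v : M)
    (hfin : ∀ j : ℤ, FiniteDimensional k
      (Submodule.span k {w : M | ∃ x ∈ 𝔤 j, w = x v})) :
    ∀ n : ℕ, FiniteDimensional k
      (Submodule.span k {w : M |
        ∃ (m : ℕ) (i : Fin m → ℤ) (x : Fin m → Module.End k M),
          1 ≤ m ∧ (∀ l, 0 < i l) ∧ (∑ l, i l) = (n : ℤ) ∧
          (∀ l, x l ∈ 𝔤 (-(i l))) ∧
          w = (List.ofFn x).foldr (fun f u => f u) v}) := by
  intro n
  obtain ⟨t, htfin, -, htspan⟩ := lemB hbracket hfin n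
  show FiniteDimensional k (Submodule.span k (monSet k M 𝔤 v n))
  rw [← htspan]
  exact FiniteDimensional.span_of_finite k htfin
end

section
/- Let A be an associative unital ℂ-algebra, and let q, t, r be natural numbers with q < t ≤ r. Let x : Fin q → Fin r → A and ξ, η : Fin r → A be families of elements of A such that: any two elements x j i and x j' i' commute; every x j i commutes with every ξ i' and with every η i'; ξ i * ξ i' = - ξ i' * ξ i, η i * η i' = - η i' * η i, and ξ i * η i' = - η i' * ξ i for all i, i'; and ξ i * ξ i = 0 and η i * η i = 0 for all i. Let D₁ be the ordered determinant of the r×r matrix whose k-th row is (x k 0, …, x k (r-1)) for k < q and is (ξ 0, …, ξ (r-1)) for q ≤ k < r, and let D₂ be the ordered determinant of the t×t matrix whose k-th row is (x k 0, …, x k (t-1)) for k < q, is (ξ 0, …, ξ (t-1)) for k = q, and is (η 0, …, η (t-1)) for q < k < t. Then D₁ * D₂ = 0 in A. -/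
namespace SuperDet

variable {A : Type*} [Ring A]

lemma prod_anticomm (c : A) : ∀ (L : List A), (∀ a ∈ L, a * c = -(c * a)) →
    L.prod * c = ((-1 : ℤ)) ^ L.length • (c * L.prod)
  | [], _ => by simp
  | a :: L, h => by
    have hc : L.prod * c = ((-1 : ℤ)) ^ L.length • (c * L.prod) :=
      prod_anticomm c L (fun b hb => h b (List.mem_cons_of_mem _ hb))
    have ha : a * c = -(c * a) := h a List.mem_cons_self
    calc (a :: L).prod * c = a * (L.prod * c) := by rw [List.prod_cons, mul_assoc]
    _ = a * (((-1 : ℤ)) ^ L.length • (c * L.prod)) := by rw [hc]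
    _ = ((-1 : ℤ)) ^ L.length • ((a * c) * L.prod) := by
        rw [mul_smul_comm, mul_assoc]
    _ = ((-1 : ℤ)) ^ L.length • (-(c * a) * L.prod) := by rw [ha]
    _ = ((-1 : ℤ)) ^ (a :: L).length • (c * (a :: L).prod) := by
        rw [List.length_cons, pow_succ, List.prod_cons, neg_mul, mul_assoc, mul_smul,
          neg_one_zsmul]

lemma prod_splice (u₁ u₂ : List A) (a b : A) (hb : ∀ z ∈ u₂, z * b = -(b * z)) :
    (u₁ ++ a :: u₂).prod * b
      = ((-1 : ℤ)) ^ u₂.length • (u₁.prod * ((a * b) * u₂.prod)) := by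
  rw [List.prod_append, List.prod_cons, mul_assoc, mul_assoc, prod_anticomm b u₂ hb,
    mul_smul_comm, mul_smul_comm, mul_assoc]

lemma prod_splice_same (u₁ u₂ : List A) (a : A) (ha : ∀ z ∈ u₂, z * a = -(a * z))
    (h0 : a * a = 0) : (u₁ ++ a :: u₂).prod * a = 0 := by
  rw [prod_splice u₁ u₂ a a ha, h0, zero_mul, mul_zero, smul_zero]

lemma prod_splice_swap (u₁ u₂ : List A) (a b : A) (ha : ∀ z ∈ u₂, z * a = -(a * z))
    (hb : ∀ z ∈ u₂, z * b = -(b * z)) (hab : a * b = -(b * a)) :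
    (u₁ ++ a :: u₂).prod * b + (u₁ ++ b :: u₂).prod * a = 0 := by
  rw [prod_splice u₁ u₂ a b hb, prod_splice u₁ u₂ b a ha, ← smul_add, ← mul_add,
    ← add_mul]
  have : a * b + b * a = 0 := by rw [hab, neg_add_cancel]
  rw [this, zero_mul, mul_zero, smul_zero]

/-- pointwise product of two commuting `ofFn` products -/
lemma ofFn_prod_mul_ofFn_prod : ∀ {n : ℕ} (a b : Fin n → A),
    (∀ i j, Commute (b i) (a j)) →
    (List.ofFn a).prod * (List.ofFn b).prod = (List.ofFn fun i => a i * b i).prod := by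
  intro n
  induction n with
  | zero => intro a b _; simp
  | succ n ih =>
    intro a b h
    have hcomm : Commute (b 0) ((List.ofFn fun i => a i.succ).prod) := by
      apply Commute.list_prod_right
      intro z hz
      rw [List.mem_ofFn] at hz
      obtain ⟨i, rfl⟩ := hz
      exact h 0 _
    rw [List.ofFn_succ, List.ofFn_succ, List.ofFn_succ, List.prod_cons, List.prod_cons,
      List.prod_cons]
    have h2 : (List.ofFn fun i => a i.succ).prod * (b 0 * (List.ofFn fun i => b i.succ).prod)
        = b 0 * ((List.ofFn fun i => a i.succ).prod * (List.ofFn fun i => b i.succ).prod) := by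
      rw [← mul_assoc, ← hcomm.eq, mul_assoc]
    rw [mul_assoc, h2, ih (fun i => a i.succ) (fun i => b i.succ) (fun i j => h _ _),
      ← mul_assoc]

omit [Ring A] in
lemma ofFn_cast {m n : ℕ} (h : m = n) (f : Fin n → A) :
    (List.ofFn fun i : Fin m => f (Fin.cast h i)) = List.ofFn f := by
  subst h; rfl

lemma ofFn_prod_split (n q : ℕ) (h : q ≤ n) (f : Fin n → A) :
    (List.ofFn f).prod
      = (List.ofFn fun j : Fin q => f ⟨j.1, lt_of_lt_of_le j.2 h⟩).prod
        * (List.ofFn fun i : Fin (n - q) => f ⟨q + i.1, by omega⟩).prod := by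
  obtain ⟨s, rfl⟩ : ∃ s, n = q + s := ⟨n - q, by omega⟩
  have h2 : (List.ofFn fun i : Fin (q + s - q) => f ⟨q + i.1, by omega⟩)
      = List.ofFn fun i : Fin s => f ⟨q + i.1, by omega⟩ := by
    have hs : q + s - q = s := by omega
    rw [← ofFn_cast hs (fun i : Fin s => f ⟨q + i.1, by omega⟩)]
    rfl
  rw [h2, ← List.prod_append]
  have e1 : (fun j : Fin q => f ⟨j.1, lt_of_lt_of_le j.2 h⟩)
      = fun j : Fin q => f (Fin.castAdd s j) := by
    funext j; congr 1
  have e2 : (fun i : Fin s => f ⟨q + i.1, by omega⟩)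
      = fun i : Fin s => f (Fin.natAdd q i) := by
    funext i; congr 1
  rw [e1, e2]; exact congrArg List.prod List.ofFn_add

end SuperDet

namespace SuperDet
open Equiv Equiv.Perm

variable {q t r : ℕ}

def nxt (hqt : q < t) (htr : t ≤ r) (σ : Perm (Fin r)) (τ : Perm (Fin t)) :
    Fin r → Fin r :=
  fun p => if h : p.1 < q then σ⁻¹ (Fin.castLE htr (τ ⟨p.1, h.trans hqt⟩)) else p

def chn (hqt : q < t) (htr : t ≤ r) (σ : Perm (Fin r)) (τ : Perm (Fin t)) : ℕ → Fin r :=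
  fun i => (nxt hqt htr σ τ)^[i] (σ⁻¹ (Fin.castLE htr (τ ⟨q, hqt⟩)))

variable (hqt : q < t) (htr : t ≤ r) (σ : Perm (Fin r)) (τ : Perm (Fin t))

lemma chn_zero : chn hqt htr σ τ 0 = σ⁻¹ (Fin.castLE htr (τ ⟨q, hqt⟩)) := rfl

lemma chn_succ (i : ℕ) :
    chn hqt htr σ τ (i + 1) = nxt hqt htr σ τ (chn hqt htr σ τ i) :=
  Function.iterate_succ_apply' _ _ _

lemma chn_succ_of_lt {i : ℕ} (h : (chn hqt htr σ τ i).1 < q) :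
    chn hqt htr σ τ (i + 1)
      = σ⁻¹ (Fin.castLE htr (τ ⟨(chn hqt htr σ τ i).1, h.trans hqt⟩)) := by
  rw [chn_succ, nxt, dif_pos h]

lemma chn_succ_ne_zero {i : ℕ} (h : (chn hqt htr σ τ i).1 < q) :
    chn hqt htr σ τ (i + 1) ≠ chn hqt htr σ τ 0 := by
  rw [chn_succ_of_lt hqt htr σ τ h, chn_zero]
  intro he
  have h1 := Fin.castLE_injective htr (σ⁻¹.injective he)
  have h2 := τ.injective h1
  have h3 : (chn hqt htr σ τ i).1 = q := congrArg Fin.val h2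
  omega

lemma chn_back {i j : ℕ} (hi : (chn hqt htr σ τ i).1 < q)
    (hj : (chn hqt htr σ τ j).1 < q)
    (he : chn hqt htr σ τ (i + 1) = chn hqt htr σ τ (j + 1)) :
    chn hqt htr σ τ i = chn hqt htr σ τ j := by
  rw [chn_succ_of_lt hqt htr σ τ hi, chn_succ_of_lt hqt htr σ τ hj] at he
  have h1 := Fin.castLE_injective htr (σ⁻¹.injective he)
  have h2 := τ.injective h1
  simp only [Fin.mk.injEq] at h2
  exact Fin.ext h2

lemma chn_ne : ∀ (i j : ℕ), i < j → (∀ s, s < j → (chn hqt htr σ τ s).1 < q) →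
    chn hqt htr σ τ i ≠ chn hqt htr σ τ j := by
  intro i
  induction i with
  | zero =>
    intro j hij hs
    obtain ⟨k, rfl⟩ : ∃ k, j = k + 1 := ⟨j - 1, by omega⟩
    exact (chn_succ_ne_zero hqt htr σ τ (hs k (by omega))).symm
  | succ i ih =>
    intro j hij hs
    obtain ⟨k, rfl⟩ : ∃ k, j = k + 1 := ⟨j - 1, by omega⟩
    intro he
    have := chn_back hqt htr σ τ (hs i (by omega)) (hs k (by omega)) he
    exact ih k (by omega) (fun s hs' => hs s (by omega)) this

lemma exists_esc : ∃ i, ¬ (chn hqt htr σ τ i).1 < q := by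
  by_contra hall
  push_neg at hall
  have hinj : Function.Injective
      (fun i : Fin (q + 1) => (⟨(chn hqt htr σ τ i.1).1, hall i.1⟩ : Fin q)) := by
    intro a b he
    simp only [Fin.mk.injEq] at he
    have he' : chn hqt htr σ τ a.1 = chn hqt htr σ τ b.1 := Fin.ext he
    rcases lt_trichotomy a.1 b.1 with h | h | h
    · exact absurd he' (chn_ne hqt htr σ τ _ _ h (fun s _ => hall s))
    · exact Fin.ext h
    · exact absurd he'.symm (chn_ne hqt htr σ τ _ _ h (fun s _ => hall s))
  have := Fintype.card_le_of_injective _ hinj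
  simp only [Fintype.card_fin] at this
  omega

def KK : ℕ := Nat.find (exists_esc hqt htr σ τ)

lemma KK_spec : ¬ (chn hqt htr σ τ (KK hqt htr σ τ)).1 < q :=
  Nat.find_spec (exists_esc hqt htr σ τ)

lemma KK_min {i : ℕ} (h : i < KK hqt htr σ τ) : (chn hqt htr σ τ i).1 < q := by
  have := Nat.find_min (exists_esc hqt htr σ τ) h
  simpa using this

lemma KK_pos (hB : (chn hqt htr σ τ 0).1 < q) : 1 ≤ KK hqt htr σ τ := by
  rcases Nat.eq_zero_or_pos (KK hqt htr σ τ) with h | h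
  · exact absurd (h ▸ hB) (KK_spec hqt htr σ τ)
  · exact h

lemma chn_inj_le {i j : ℕ} (hi : i ≤ KK hqt htr σ τ) (hj : j ≤ KK hqt htr σ τ)
    (he : chn hqt htr σ τ i = chn hqt htr σ τ j) : i = j := by
  rcases lt_trichotomy i j with h | h | h
  · exact absurd he (chn_ne hqt htr σ τ _ _ h
      (fun s hs => KK_min hqt htr σ τ (by omega)))
  · exact h
  · exact absurd he.symm (chn_ne hqt htr σ τ _ _ h
      (fun s hs => KK_min hqt htr σ τ (by omega)))

def ptl : ℕ → Fin t := fun i =>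
  if h : (chn hqt htr σ τ i).1 < q then ⟨(chn hqt htr σ τ i).1, h.trans hqt⟩
  else ⟨q, hqt⟩

lemma ptl_of_lt {i : ℕ} (h : (chn hqt htr σ τ i).1 < q) :
    ptl hqt htr σ τ i = ⟨(chn hqt htr σ τ i).1, h.trans hqt⟩ := dif_pos h

lemma ptl_KK : ptl hqt htr σ τ (KK hqt htr σ τ) = ⟨q, hqt⟩ :=
  dif_neg (KK_spec hqt htr σ τ)

lemma ptl_inj_le {i j : ℕ} (hi : i ≤ KK hqt htr σ τ) (hj : j ≤ KK hqt htr σ τ)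
    (he : ptl hqt htr σ τ i = ptl hqt htr σ τ j) : i = j := by
  rcases eq_or_lt_of_le hi with hi' | hi' <;> rcases eq_or_lt_of_le hj with hj' | hj'
  · omega
  · rw [hi', ptl_KK, ptl_of_lt hqt htr σ τ (KK_min hqt htr σ τ hj')] at he
    have := congrArg Fin.val he
    simp only at this
    have := KK_min hqt htr σ τ hj'
    omega
  · rw [hj', ptl_KK, ptl_of_lt hqt htr σ τ (KK_min hqt htr σ τ hi')] at he
    have := congrArg Fin.val he
    simp only at this
    have := KK_min hqt htr σ τ hi'
    omega
  · rw [ptl_of_lt hqt htr σ τ (KK_min hqt htr σ τ hi'),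
      ptl_of_lt hqt htr σ τ (KK_min hqt htr σ τ hj')] at he
    have hv := congrArg Fin.val he
    simp only at hv
    exact chn_inj_le hqt htr σ τ (le_of_lt hi') (le_of_lt hj') (Fin.ext hv)

def Ld : List (Fin r) := (List.range (KK hqt htr σ τ + 1)).map (chn hqt htr σ τ)

def Lg : List (Fin t) := (List.range (KK hqt htr σ τ + 1)).map (ptl hqt htr σ τ)

lemma Ld_nodup : (Ld hqt htr σ τ).Nodup := by
  refine List.Nodup.map_on ?_ List.nodup_range
  intro i hi j hj he
  rw [List.mem_range] at hi hj
  exact chn_inj_le hqt htr σ τ (by omega) (by omega) he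

lemma Lg_nodup : (Lg hqt htr σ τ).Nodup := by
  refine List.Nodup.map_on ?_ List.nodup_range
  intro i hi j hj he
  rw [List.mem_range] at hi hj
  exact ptl_inj_le hqt htr σ τ (by omega) (by omega) he

lemma Ld_length : (Ld hqt htr σ τ).length = KK hqt htr σ τ + 1 := by
  simp [Ld]

lemma Lg_length : (Lg hqt htr σ τ).length = KK hqt htr σ τ + 1 := by
  simp [Lg]

lemma mem_Ld {z : Fin r} :
    z ∈ Ld hqt htr σ τ ↔ ∃ i, i ≤ KK hqt htr σ τ ∧ chn hqt htr σ τ i = z := by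
  simp [Ld, List.mem_map, List.mem_range, Nat.lt_succ_iff]

lemma mem_Lg {z : Fin t} :
    z ∈ Lg hqt htr σ τ ↔ ∃ i, i ≤ KK hqt htr σ τ ∧ ptl hqt htr σ τ i = z := by
  simp [Lg, List.mem_map, List.mem_range, Nat.lt_succ_iff]

lemma Ld_getElem {i : ℕ} (hi : i < KK hqt htr σ τ + 1) :
    (Ld hqt htr σ τ)[i]'(by rw [Ld_length]; omega) = chn hqt htr σ τ i := by
  simp [Ld]

lemma Lg_getElem {i : ℕ} (hi : i < KK hqt htr σ τ + 1) :
    (Lg hqt htr σ τ)[i]'(by rw [Lg_length]; omega) = ptl hqt htr σ τ i := by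
  simp [Lg]

lemma fpLd_lt {i : ℕ} (hi : i < KK hqt htr σ τ) :
    (Ld hqt htr σ τ).formPerm (chn hqt htr σ τ i) = chn hqt htr σ τ (i + 1) := by
  have h1 : i < (Ld hqt htr σ τ).length := by rw [Ld_length]; omega
  have := List.formPerm_apply_getElem (Ld hqt htr σ τ) (Ld_nodup hqt htr σ τ) i h1
  rw [Ld_getElem hqt htr σ τ (by omega)] at this
  have hm : (i + 1) % (Ld hqt htr σ τ).length = i + 1 := by
    rw [Ld_length]; exact Nat.mod_eq_of_lt (by omega)
  simp only [hm] at this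
  rw [this]
  exact Ld_getElem hqt htr σ τ (by omega)

lemma fpLd_last :
    (Ld hqt htr σ τ).formPerm (chn hqt htr σ τ (KK hqt htr σ τ)) = chn hqt htr σ τ 0 := by
  have h1 : KK hqt htr σ τ < (Ld hqt htr σ τ).length := by rw [Ld_length]; omega
  have := List.formPerm_apply_getElem (Ld hqt htr σ τ) (Ld_nodup hqt htr σ τ) _ h1
  rw [Ld_getElem hqt htr σ τ (by omega)] at this
  have hm : (KK hqt htr σ τ + 1) % (Ld hqt htr σ τ).length = 0 := by
    rw [Ld_length]; exact Nat.mod_self _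
  simp only [hm] at this
  rw [this]
  exact Ld_getElem hqt htr σ τ (by omega)

lemma fpLg_lt {i : ℕ} (hi : i < KK hqt htr σ τ) :
    (Lg hqt htr σ τ).formPerm (ptl hqt htr σ τ i) = ptl hqt htr σ τ (i + 1) := by
  have h1 : i < (Lg hqt htr σ τ).length := by rw [Lg_length]; omega
  have := List.formPerm_apply_getElem (Lg hqt htr σ τ) (Lg_nodup hqt htr σ τ) i h1
  rw [Lg_getElem hqt htr σ τ (by omega)] at this
  have hm : (i + 1) % (Lg hqt htr σ τ).length = i + 1 := by
    rw [Lg_length]; exact Nat.mod_eq_of_lt (by omega)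
  simp only [hm] at this
  rw [this]
  exact Lg_getElem hqt htr σ τ (by omega)

lemma fpLg_last :
    (Lg hqt htr σ τ).formPerm (ptl hqt htr σ τ (KK hqt htr σ τ)) = ptl hqt htr σ τ 0 := by
  have h1 : KK hqt htr σ τ < (Lg hqt htr σ τ).length := by rw [Lg_length]; omega
  have := List.formPerm_apply_getElem (Lg hqt htr σ τ) (Lg_nodup hqt htr σ τ) _ h1
  rw [Lg_getElem hqt htr σ τ (by omega)] at this
  have hm : (KK hqt htr σ τ + 1) % (Lg hqt htr σ τ).length = 0 := by
    rw [Lg_length]; exact Nat.mod_self _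
  simp only [hm] at this
  rw [this]
  exact Lg_getElem hqt htr σ τ (by omega)

end SuperDet

namespace SuperDet
open Equiv Equiv.Perm

variable {q t r : ℕ}

def istar (hqt : q < t) (htr : t ≤ r) (σ : Perm (Fin r)) (τ : Perm (Fin t)) :
    Perm (Fin r) := σ * (Ld hqt htr σ τ).formPerm

def tstar (hqt : q < t) (htr : t ≤ r) (σ : Perm (Fin r)) (τ : Perm (Fin t)) :
    Perm (Fin t) := τ * ((Lg hqt htr σ τ).formPerm)⁻¹

variable (hqt : q < t) (htr : t ≤ r) (σ : Perm (Fin r)) (τ : Perm (Fin t))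

lemma istar_apply_lt {i : ℕ} (hi : i < KK hqt htr σ τ) :
    istar hqt htr σ τ (chn hqt htr σ τ i)
      = Fin.castLE htr (τ (ptl hqt htr σ τ i)) := by
  have h1 : (chn hqt htr σ τ i).1 < q := KK_min hqt htr σ τ hi
  show σ ((Ld hqt htr σ τ).formPerm (chn hqt htr σ τ i)) = _
  rw [fpLd_lt hqt htr σ τ hi, chn_succ_of_lt hqt htr σ τ h1, ptl_of_lt hqt htr σ τ h1]
  exact σ.apply_symm_apply _

lemma istar_apply_last :
    istar hqt htr σ τ (chn hqt htr σ τ (KK hqt htr σ τ))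
      = Fin.castLE htr (τ ⟨q, hqt⟩) := by
  show σ ((Ld hqt htr σ τ).formPerm (chn hqt htr σ τ (KK hqt htr σ τ))) = _
  rw [fpLd_last hqt htr σ τ, chn_zero]
  exact σ.apply_symm_apply _

lemma istar_apply_not_mem {z : Fin r} (hz : z ∉ Ld hqt htr σ τ) :
    istar hqt htr σ τ z = σ z := by
  show σ ((Ld hqt htr σ τ).formPerm z) = σ z
  rw [List.formPerm_apply_of_notMem hz]

lemma tstar_apply_zero :
    tstar hqt htr σ τ (ptl hqt htr σ τ 0) = τ ⟨q, hqt⟩ := by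
  show τ (((Lg hqt htr σ τ).formPerm)⁻¹ (ptl hqt htr σ τ 0)) = _
  have : ((Lg hqt htr σ τ).formPerm)⁻¹ (ptl hqt htr σ τ 0)
      = ptl hqt htr σ τ (KK hqt htr σ τ) := by
    rw [Perm.inv_eq_iff_eq, fpLg_last hqt htr σ τ]
  rw [this, ptl_KK]

lemma tstar_apply_succ {i : ℕ} (hi : i < KK hqt htr σ τ) :
    tstar hqt htr σ τ (ptl hqt htr σ τ (i + 1)) = τ (ptl hqt htr σ τ i) := by
  show τ (((Lg hqt htr σ τ).formPerm)⁻¹ (ptl hqt htr σ τ (i + 1))) = _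
  have : ((Lg hqt htr σ τ).formPerm)⁻¹ (ptl hqt htr σ τ (i + 1))
      = ptl hqt htr σ τ i := by
    rw [Perm.inv_eq_iff_eq, fpLg_lt hqt htr σ τ hi]
  rw [this]

lemma tstar_apply_not_mem {w : Fin t} (hw : w ∉ Lg hqt htr σ τ) :
    tstar hqt htr σ τ w = τ w := by
  show τ (((Lg hqt htr σ τ).formPerm)⁻¹ w) = τ w
  congr 1
  rw [Perm.inv_eq_iff_eq, List.formPerm_apply_of_notMem hw]

-- The chain of the starred pair, in case B (`hB`).
lemma chn_star_lt (hB : (chn hqt htr σ τ 0).1 < q) :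
    ∀ i, i < KK hqt htr σ τ →
      chn hqt htr (istar hqt htr σ τ) (tstar hqt htr σ τ) i
        = chn hqt htr σ τ (KK hqt htr σ τ - 1 - i) := by
  have hK1 : 1 ≤ KK hqt htr σ τ := KK_pos hqt htr σ τ hB
  have h5 : (istar hqt htr σ τ)⁻¹ = ((Ld hqt htr σ τ).formPerm)⁻¹ * σ⁻¹ := by
    rw [istar, mul_inv_rev]
  intro i
  induction i with
  | zero =>
    intro _
    obtain ⟨K', hK'⟩ : ∃ K', KK hqt htr σ τ = K' + 1 := ⟨KK hqt htr σ τ - 1, by omega⟩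
    have hgoal : KK hqt htr σ τ - 1 - 0 = K' := by omega
    rw [hgoal, chn_zero]
    have h1 : ptl hqt htr σ τ (K' + 1) = ⟨q, hqt⟩ := by rw [← hK']; exact ptl_KK hqt htr σ τ
    have h2 : tstar hqt htr σ τ ⟨q, hqt⟩ = τ (ptl hqt htr σ τ K') := by
      rw [← h1]; exact tstar_apply_succ hqt htr σ τ (by omega)
    rw [h2, h5]
    have h3 : (chn hqt htr σ τ K').1 < q := KK_min hqt htr σ τ (by omega)
    have h4 : σ⁻¹ (Fin.castLE htr (τ (ptl hqt htr σ τ K')))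
        = chn hqt htr σ τ (K' + 1) := by
      rw [chn_succ_of_lt hqt htr σ τ h3, ptl_of_lt hqt htr σ τ h3]
    show ((Ld hqt htr σ τ).formPerm)⁻¹ (σ⁻¹ _) = _
    rw [h4, Perm.inv_eq_iff_eq]
    exact (fpLd_lt hqt htr σ τ (by omega)).symm
  | succ i ih =>
    intro hi1
    have hi : i < KK hqt htr σ τ := by omega
    have hprev := ih hi
    have hlt : (chn hqt htr (istar hqt htr σ τ) (tstar hqt htr σ τ) i).1 < q := by
      rw [hprev]; exact KK_min hqt htr σ τ (by omega)
    rw [chn_succ_of_lt hqt htr (istar hqt htr σ τ) (tstar hqt htr σ τ) hlt]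
    obtain ⟨j', hj'⟩ : ∃ j', KK hqt htr σ τ - 1 - i = j' + 1 := ⟨KK hqt htr σ τ - 2 - i, by omega⟩
    have hch : (chn hqt htr σ τ (j' + 1)).1 < q := KK_min hqt htr σ τ (by omega)
    have harg : (⟨(chn hqt htr (istar hqt htr σ τ) (tstar hqt htr σ τ) i).1,
        lt_of_lt_of_le hlt hqt.le⟩ : Fin t) = ptl hqt htr σ τ (j' + 1) := by
      rw [ptl_of_lt hqt htr σ τ hch]
      apply Fin.ext
      simp only
      rw [hprev, hj']
    rw [harg, tstar_apply_succ hqt htr σ τ (show j' < KK hqt htr σ τ by omega), h5]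
    have h3 : (chn hqt htr σ τ j').1 < q := KK_min hqt htr σ τ (by omega)
    have h4 : σ⁻¹ (Fin.castLE htr (τ (ptl hqt htr σ τ j')))
        = chn hqt htr σ τ (j' + 1) := by
      rw [chn_succ_of_lt hqt htr σ τ h3, ptl_of_lt hqt htr σ τ h3]
    show ((Ld hqt htr σ τ).formPerm)⁻¹ (σ⁻¹ _) = _
    rw [h4, Perm.inv_eq_iff_eq]
    have hgoal : KK hqt htr σ τ - 1 - (i + 1) = j' := by omega
    rw [hgoal]
    exact (fpLd_lt hqt htr σ τ (by omega)).symm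


lemma chn_star_K (hB : (chn hqt htr σ τ 0).1 < q) :
    chn hqt htr (istar hqt htr σ τ) (tstar hqt htr σ τ) (KK hqt htr σ τ)
      = chn hqt htr σ τ (KK hqt htr σ τ) := by
  have hK1 : 1 ≤ KK hqt htr σ τ := KK_pos hqt htr σ τ hB
  obtain ⟨K', hK'⟩ : ∃ K', KK hqt htr σ τ = K' + 1 := ⟨KK hqt htr σ τ - 1, by omega⟩
  have h5 : (istar hqt htr σ τ)⁻¹ = ((Ld hqt htr σ τ).formPerm)⁻¹ * σ⁻¹ := by
    rw [istar, mul_inv_rev]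
  have hprev : chn hqt htr (istar hqt htr σ τ) (tstar hqt htr σ τ) K'
      = chn hqt htr σ τ 0 := by
    have := chn_star_lt hqt htr σ τ hB K' (by omega)
    rwa [show KK hqt htr σ τ - 1 - K' = 0 by omega] at this
  have hlt : (chn hqt htr (istar hqt htr σ τ) (tstar hqt htr σ τ) K').1 < q := by
    rw [hprev]; exact hB
  rw [hK', chn_succ_of_lt hqt htr (istar hqt htr σ τ) (tstar hqt htr σ τ) hlt]
  have harg : (⟨(chn hqt htr (istar hqt htr σ τ) (tstar hqt htr σ τ) K').1,
      lt_of_lt_of_le hlt hqt.le⟩ : Fin t) = ptl hqt htr σ τ 0 := by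
    rw [ptl_of_lt hqt htr σ τ hB]
    apply Fin.ext
    simp only
    rw [hprev]
  rw [harg, tstar_apply_zero hqt htr σ τ, h5]
  show ((Ld hqt htr σ τ).formPerm)⁻¹ (σ⁻¹ _) = _
  rw [← chn_zero hqt htr σ τ, Perm.inv_eq_iff_eq, ← hK']
  exact (fpLd_last hqt htr σ τ).symm

lemma KK_star (hB : (chn hqt htr σ τ 0).1 < q) :
    KK hqt htr (istar hqt htr σ τ) (tstar hqt htr σ τ) = KK hqt htr σ τ := by
  rw [KK, Nat.find_eq_iff]
  constructor
  · rw [chn_star_K hqt htr σ τ hB]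
    exact KK_spec hqt htr σ τ
  · intro n hn
    rw [not_not, chn_star_lt hqt htr σ τ hB n hn]
    exact KK_min hqt htr σ τ (by omega)

lemma hB_star (hB : (chn hqt htr σ τ 0).1 < q) :
    (chn hqt htr (istar hqt htr σ τ) (tstar hqt htr σ τ) 0).1 < q := by
  have hK1 : 1 ≤ KK hqt htr σ τ := KK_pos hqt htr σ τ hB
  rw [chn_star_lt hqt htr σ τ hB 0 (by omega)]
  exact KK_min hqt htr σ τ (by omega)

lemma ptl_star_lt (hB : (chn hqt htr σ τ 0).1 < q) {i : ℕ} (hi : i < KK hqt htr σ τ) :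
    ptl hqt htr (istar hqt htr σ τ) (tstar hqt htr σ τ) i
      = ptl hqt htr σ τ (KK hqt htr σ τ - 1 - i) := by
  have h1 : (chn hqt htr σ τ (KK hqt htr σ τ - 1 - i)).1 < q :=
    KK_min hqt htr σ τ (by omega)
  have h2 : (chn hqt htr (istar hqt htr σ τ) (tstar hqt htr σ τ) i).1 < q := by
    rw [chn_star_lt hqt htr σ τ hB i hi]; exact h1
  rw [ptl_of_lt hqt htr (istar hqt htr σ τ) (tstar hqt htr σ τ) h2,
    ptl_of_lt hqt htr σ τ h1]
  apply Fin.ext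
  simp only
  rw [chn_star_lt hqt htr σ τ hB i hi]

lemma mem_Ld_star_iff (hB : (chn hqt htr σ τ 0).1 < q) {z : Fin r} :
    z ∈ Ld hqt htr (istar hqt htr σ τ) (tstar hqt htr σ τ) ↔ z ∈ Ld hqt htr σ τ := by
  rw [mem_Ld, mem_Ld]
  constructor
  · rintro ⟨i, hi, rfl⟩
    rw [KK_star hqt htr σ τ hB] at hi
    rcases eq_or_lt_of_le hi with h | h
    · exact ⟨KK hqt htr σ τ, le_refl _, by rw [h, chn_star_K hqt htr σ τ hB]⟩
    · exact ⟨KK hqt htr σ τ - 1 - i, by omega, by rw [chn_star_lt hqt htr σ τ hB i h]⟩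
  · rintro ⟨i, hi, rfl⟩
    rcases eq_or_lt_of_le hi with h | h
    · exact ⟨KK hqt htr σ τ, by rw [KK_star hqt htr σ τ hB],
        by rw [h, chn_star_K hqt htr σ τ hB]⟩
    · refine ⟨KK hqt htr σ τ - 1 - i, by rw [KK_star hqt htr σ τ hB]; omega, ?_⟩
      rw [chn_star_lt hqt htr σ τ hB _ (by omega),
        show KK hqt htr σ τ - 1 - (KK hqt htr σ τ - 1 - i) = i by omega]

lemma mem_Lg_star_iff (hB : (chn hqt htr σ τ 0).1 < q) {w : Fin t} :
    w ∈ Lg hqt htr (istar hqt htr σ τ) (tstar hqt htr σ τ) ↔ w ∈ Lg hqt htr σ τ := by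
  rw [mem_Lg, mem_Lg]
  have hKs := KK_star hqt htr σ τ hB
  constructor
  · rintro ⟨i, hi, rfl⟩
    rw [hKs] at hi
    rcases eq_or_lt_of_le hi with h | h
    · refine ⟨KK hqt htr σ τ, le_refl _, ?_⟩
      rw [h, ptl_KK, ← hKs, ptl_KK]
    · exact ⟨KK hqt htr σ τ - 1 - i, by omega, by rw [ptl_star_lt hqt htr σ τ hB h]⟩
  · rintro ⟨i, hi, rfl⟩
    rcases eq_or_lt_of_le hi with h | h
    · refine ⟨KK hqt htr σ τ, by rw [hKs], ?_⟩
      rw [h, ← hKs, ptl_KK, hKs, ptl_KK]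
    · refine ⟨KK hqt htr σ τ - 1 - i, by omega, ?_⟩
      rw [ptl_star_lt hqt htr σ τ hB (by omega),
        show KK hqt htr σ τ - 1 - (KK hqt htr σ τ - 1 - i) = i by omega]

lemma fpLd_star (hB : (chn hqt htr σ τ 0).1 < q) :
    (Ld hqt htr (istar hqt htr σ τ) (tstar hqt htr σ τ)).formPerm
      = ((Ld hqt htr σ τ).formPerm)⁻¹ := by
  have hK1 : 1 ≤ KK hqt htr σ τ := KK_pos hqt htr σ τ hB
  have hKs := KK_star hqt htr σ τ hB
  apply Equiv.ext
  intro z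
  by_cases hz : z ∈ Ld hqt htr σ τ
  · rw [mem_Ld] at hz
    obtain ⟨i, hi, rfl⟩ := hz
    rcases eq_or_lt_of_le hi with h | h
    · -- i = KK : z = chn KK = chn* KK* ↦ chn* 0 = chn (KK-1)
      subst h
      have e1 : chn hqt htr σ τ (KK hqt htr σ τ)
          = chn hqt htr (istar hqt htr σ τ) (tstar hqt htr σ τ)
              (KK hqt htr (istar hqt htr σ τ) (tstar hqt htr σ τ)) := by
        rw [hKs, chn_star_K hqt htr σ τ hB]
      rw [e1, fpLd_last hqt htr (istar hqt htr σ τ) (tstar hqt htr σ τ),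
        chn_star_lt hqt htr σ τ hB 0 (show 0 < KK hqt htr σ τ by omega),
        Perm.eq_inv_iff_eq, ← e1,
        show KK hqt htr σ τ - 1 - 0 = KK hqt htr σ τ - 1 by omega]
      have h9 := fpLd_lt hqt htr σ τ (i := KK hqt htr σ τ - 1) (by omega)
      rw [show KK hqt htr σ τ - 1 + 1 = KK hqt htr σ τ by omega] at h9
      exact h9
    · rcases Nat.eq_zero_or_pos i with h0 | h0
      · -- i = 0 : chn 0 = chn* (KK-1) ↦ chn* KK = chn KK
        subst h0
        have e1 : chn hqt htr σ τ 0
            = chn hqt htr (istar hqt htr σ τ) (tstar hqt htr σ τ) (KK hqt htr σ τ - 1) := by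
          rw [chn_star_lt hqt htr σ τ hB _ (by omega),
            show KK hqt htr σ τ - 1 - (KK hqt htr σ τ - 1) = 0 by omega]
        rw [e1]
        have e2 := fpLd_lt hqt htr (istar hqt htr σ τ) (tstar hqt htr σ τ)
          (i := KK hqt htr σ τ - 1) (by rw [hKs]; omega)
        rw [e2, show KK hqt htr σ τ - 1 + 1 = KK hqt htr σ τ by omega,
          chn_star_K hqt htr σ τ hB, Perm.eq_inv_iff_eq, ← e1]
        exact fpLd_last hqt htr σ τ
      · -- 1 ≤ i < KK : chn i = chn* (KK-1-i) ↦ chn* (KK-i) = chn (i-1)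
        have e1 : chn hqt htr σ τ i
            = chn hqt htr (istar hqt htr σ τ) (tstar hqt htr σ τ) (KK hqt htr σ τ - 1 - i) := by
          rw [chn_star_lt hqt htr σ τ hB _ (by omega),
            show KK hqt htr σ τ - 1 - (KK hqt htr σ τ - 1 - i) = i by omega]
        rw [e1]
        have e2 := fpLd_lt hqt htr (istar hqt htr σ τ) (tstar hqt htr σ τ)
          (i := KK hqt htr σ τ - 1 - i) (by rw [hKs]; omega)
        rw [e2, chn_star_lt hqt htr σ τ hB _ (by rw [← hKs] at *; omega),
          show KK hqt htr σ τ - 1 - (KK hqt htr σ τ - 1 - i + 1) = i - 1 by omega,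
          Perm.eq_inv_iff_eq, ← e1]
        have := fpLd_lt hqt htr σ τ (i := i - 1) (by omega)
        rwa [show i - 1 + 1 = i by omega] at this
  · have hz' : z ∉ Ld hqt htr (istar hqt htr σ τ) (tstar hqt htr σ τ) := by
      rw [mem_Ld_star_iff hqt htr σ τ hB]; exact hz
    rw [List.formPerm_apply_of_notMem hz', Perm.eq_inv_iff_eq,
      List.formPerm_apply_of_notMem hz]

lemma fpLg_star (hB : (chn hqt htr σ τ 0).1 < q) :
    (Lg hqt htr (istar hqt htr σ τ) (tstar hqt htr σ τ)).formPerm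
      = ((Lg hqt htr σ τ).formPerm)⁻¹ := by
  have hK1 : 1 ≤ KK hqt htr σ τ := KK_pos hqt htr σ τ hB
  have hKs := KK_star hqt htr σ τ hB
  apply Equiv.ext
  intro w
  by_cases hw : w ∈ Lg hqt htr σ τ
  · rw [mem_Lg] at hw
    obtain ⟨i, hi, rfl⟩ := hw
    rcases eq_or_lt_of_le hi with h | h
    · -- i = KK : ptl KK = ptl* KK* ↦ ptl* 0 = ptl (KK-1)
      subst h
      have e1 : ptl hqt htr σ τ (KK hqt htr σ τ)
          = ptl hqt htr (istar hqt htr σ τ) (tstar hqt htr σ τ)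
              (KK hqt htr (istar hqt htr σ τ) (tstar hqt htr σ τ)) := by
        rw [ptl_KK hqt htr σ τ]
        exact (ptl_KK hqt htr (istar hqt htr σ τ) (tstar hqt htr σ τ)).symm
      rw [e1, fpLg_last hqt htr (istar hqt htr σ τ) (tstar hqt htr σ τ),
        ptl_star_lt hqt htr σ τ hB (by omega : 0 < KK hqt htr σ τ), Perm.eq_inv_iff_eq, ← e1,
        show KK hqt htr σ τ - 1 - 0 = KK hqt htr σ τ - 1 by omega]
      have h9 := fpLg_lt hqt htr σ τ (i := KK hqt htr σ τ - 1) (by omega)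
      rw [show KK hqt htr σ τ - 1 + 1 = KK hqt htr σ τ by omega] at h9
      exact h9
    · rcases Nat.eq_zero_or_pos i with h0 | h0
      · subst h0
        have e1 : ptl hqt htr σ τ 0
            = ptl hqt htr (istar hqt htr σ τ) (tstar hqt htr σ τ) (KK hqt htr σ τ - 1) := by
          rw [ptl_star_lt hqt htr σ τ hB (by omega : KK hqt htr σ τ - 1 < KK hqt htr σ τ),
            show KK hqt htr σ τ - 1 - (KK hqt htr σ τ - 1) = 0 by omega]
        rw [e1]
        have e2 := fpLg_lt hqt htr (istar hqt htr σ τ) (tstar hqt htr σ τ)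
          (i := KK hqt htr σ τ - 1) (by rw [hKs]; omega)
        rw [e2, show KK hqt htr σ τ - 1 + 1 = KK hqt htr σ τ by omega, ← hKs, ptl_KK,
          hKs, Perm.eq_inv_iff_eq, ← ptl_KK hqt htr σ τ, ← e1]
        exact fpLg_last hqt htr σ τ
      · have e1 : ptl hqt htr σ τ i
            = ptl hqt htr (istar hqt htr σ τ) (tstar hqt htr σ τ) (KK hqt htr σ τ - 1 - i) := by
          rw [ptl_star_lt hqt htr σ τ hB (show KK hqt htr σ τ - 1 - i < KK hqt htr σ τ by omega),
            show KK hqt htr σ τ - 1 - (KK hqt htr σ τ - 1 - i) = i by omega]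
        rw [e1]
        have e2 := fpLg_lt hqt htr (istar hqt htr σ τ) (tstar hqt htr σ τ)
          (i := KK hqt htr σ τ - 1 - i) (by rw [hKs]; omega)
        rw [e2, ptl_star_lt hqt htr σ τ hB
            (show KK hqt htr σ τ - 1 - i + 1 < KK hqt htr σ τ by omega),
          show KK hqt htr σ τ - 1 - (KK hqt htr σ τ - 1 - i + 1) = i - 1 by omega,
          Perm.eq_inv_iff_eq, ← e1]
        have := fpLg_lt hqt htr σ τ (i := i - 1) (by omega)
        rwa [show i - 1 + 1 = i by omega] at this
  · have hw' : w ∉ Lg hqt htr (istar hqt htr σ τ) (tstar hqt htr σ τ) := by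
      rw [mem_Lg_star_iff hqt htr σ τ hB]; exact hw
    rw [List.formPerm_apply_of_notMem hw', Perm.eq_inv_iff_eq,
      List.formPerm_apply_of_notMem hw]

lemma istar_istar (hB : (chn hqt htr σ τ 0).1 < q) :
    istar hqt htr (istar hqt htr σ τ) (tstar hqt htr σ τ) = σ := by
  rw [istar, fpLd_star hqt htr σ τ hB, istar, mul_assoc, mul_inv_cancel, mul_one]

lemma tstar_tstar (hB : (chn hqt htr σ τ 0).1 < q) :
    tstar hqt htr (istar hqt htr σ τ) (tstar hqt htr σ τ) = τ := by
  rw [tstar, fpLg_star hqt htr σ τ hB, inv_inv, tstar, mul_assoc, inv_mul_cancel, mul_one]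


end SuperDet

namespace SuperDet
open Equiv Equiv.Perm

section Val

variable {A : Type*} [Ring A] {q t r : ℕ}

omit [Ring A] in
lemma ofFn_congr' {n : ℕ} {f g : Fin n → A} (h : ∀ i, f i = g i) :
    List.ofFn f = List.ofFn g := congrArg List.ofFn (funext h)

lemma ofFn_prod_one {n : ℕ} (hn : n = 1) (g : Fin n → A) :
    (List.ofFn g).prod = g ⟨0, by omega⟩ := by
  subst hn
  simp only [List.ofFn_succ, List.ofFn_zero, List.prod_cons, List.prod_nil, mul_one]
  congr 1

def L1 (x : Fin q → Fin r → A) (ξ : Fin r → A) (σ : Perm (Fin r)) : List A :=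
  List.ofFn fun k : Fin r => if h : (k : ℕ) < q then x ⟨k, h⟩ (σ k) else ξ (σ k)

def X1 (hqt : q < t) (htr : t ≤ r) (x : Fin q → Fin r → A) (σ : Perm (Fin r)) : List A :=
  List.ofFn fun j : Fin q => x j (σ ⟨j.1, lt_of_lt_of_le (lt_trans j.2 hqt) htr⟩)

def W1 (hqt : q < t) (htr : t ≤ r) (ξ : Fin r → A) (σ : Perm (Fin r)) : List A :=
  List.ofFn fun i : Fin (r - q) => ξ (σ ⟨q + i.1, by have := i.2; omega⟩)

def L2 (hqt : q < t) (htr : t ≤ r) (x : Fin q → Fin r → A) (ξ η : Fin r → A)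
    (τ : Perm (Fin t)) : List A :=
  List.ofFn fun k : Fin t =>
    if h : (k : ℕ) < q then x ⟨k, h⟩ (Fin.castLE htr (τ k))
    else if (k : ℕ) = q then ξ (Fin.castLE htr (τ k))
    else η (Fin.castLE htr (τ k))

def X2 (hqt : q < t) (htr : t ≤ r) (x : Fin q → Fin r → A) (τ : Perm (Fin t)) : List A :=
  List.ofFn fun j : Fin q => x j (Fin.castLE htr (τ ⟨j.1, lt_trans j.2 hqt⟩))

def mm (hqt : q < t) (htr : t ≤ r) (τ : Perm (Fin t)) : Fin r :=
  Fin.castLE htr (τ ⟨q, hqt⟩)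

def W2 (hqt : q < t) (htr : t ≤ r) (η : Fin r → A) (τ : Perm (Fin t)) : List A :=
  List.ofFn fun i : Fin (t - (q + 1)) =>
    η (Fin.castLE htr (τ ⟨q + 1 + i.1, by have := i.2; omega⟩))

variable (hqt : q < t) (htr : t ≤ r)
variable (x : Fin q → Fin r → A) (ξ η : Fin r → A)

lemma L1_prod (σ : Perm (Fin r)) :
    (L1 x ξ σ).prod = (X1 hqt htr x σ).prod * (W1 hqt htr ξ σ).prod := by
  rw [L1, ofFn_prod_split r q (le_trans hqt.le htr)]
  refine congrArg₂ (· * ·) (congrArg List.prod (ofFn_congr' fun j => ?_))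
    (congrArg List.prod (ofFn_congr' fun i => ?_))
  · beta_reduce
    rw [dif_pos (show ((j : ℕ) < q) from j.2)]
  · beta_reduce
    rw [dif_neg (show ¬ ((q + (i : ℕ)) < q) by omega)]

lemma L2_prod (τ : Perm (Fin t)) :
    (L2 hqt htr x ξ η τ).prod
      = (X2 hqt htr x τ).prod * (ξ (mm hqt htr τ) * (W2 hqt htr η τ).prod) := by
  rw [L2, ofFn_prod_split t (q + 1) hqt, ofFn_prod_split (q + 1) q (by omega), mul_assoc]
  refine congrArg₂ (· * ·) (congrArg List.prod (ofFn_congr' fun j => ?_))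
    (congrArg₂ (· * ·) ?_ (congrArg List.prod (ofFn_congr' fun i => ?_)))
  · beta_reduce
    rw [dif_pos (show ((j : ℕ) < q) from j.2)]
  · rw [ofFn_prod_one (by omega)]
    beta_reduce
    rw [dif_neg (show ¬ ((q + (0 : ℕ)) < q) by omega), if_pos (show q + (0:ℕ) = q from rfl)]
    rfl
  · beta_reduce
    rw [dif_neg (show ¬ ((q + 1 + (i : ℕ)) < q) by omega),
      if_neg (show ¬ ((q + 1 + (i : ℕ)) = q) by omega)]

lemma V_eq (hxξ : ∀ j i i', Commute (x j i) (ξ i')) (σ : Perm (Fin r)) (τ : Perm (Fin t)) :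
    (L1 x ξ σ).prod * (L2 hqt htr x ξ η τ).prod
      = ((X1 hqt htr x σ).prod * (X2 hqt htr x τ).prod)
        * (((W1 hqt htr ξ σ).prod * ξ (mm hqt htr τ)) * (W2 hqt htr η τ).prod) := by
  have hc : Commute ((X2 hqt htr x τ).prod) ((W1 hqt htr ξ σ).prod) := by
    apply Commute.list_prod_right
    intro z hz
    rw [W1, List.mem_ofFn] at hz
    obtain ⟨i, rfl⟩ := hz
    apply Commute.list_prod_left
    intro w hw
    rw [X2, List.mem_ofFn] at hw
    obtain ⟨j, rfl⟩ := hw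
    exact hxξ _ _ _
  rw [L1_prod hqt htr x ξ σ, L2_prod hqt htr x ξ η τ]
  simp only [mul_assoc]
  congr 1
  rw [← mul_assoc, ← hc.eq, mul_assoc]

lemma caseA (hξξ : ∀ i i', ξ i * ξ i' = - (ξ i' * ξ i)) (hξ0 : ∀ i, ξ i * ξ i = 0)
    (σ : Perm (Fin r)) (τ : Perm (Fin t)) (hA : ¬ (chn hqt htr σ τ 0).1 < q) :
    (W1 hqt htr ξ σ).prod * ξ (mm hqt htr τ) = 0 := by
  have hp0 : σ (chn hqt htr σ τ 0) = mm hqt htr τ := by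
    rw [chn_zero, mm]; exact σ.apply_symm_apply _
  have hq0 : q ≤ (chn hqt htr σ τ 0).1 := not_lt.mp hA
  have hp2 := (chn hqt htr σ τ 0).2
  set p0 := chn hqt htr σ τ 0 with hp0def
  set j0 := p0.1 - q with hj0def
  have hlen : (W1 hqt htr ξ σ : List A).length = r - q := by simp [W1]
  have hj0 : j0 < (W1 hqt htr ξ σ : List A).length := by rw [hlen]; omega
  have hsplit : W1 hqt htr ξ σ
      = (W1 hqt htr ξ σ).take j0 ++ ξ (mm hqt htr τ) :: (W1 hqt htr ξ σ).drop (j0 + 1) := by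
    conv_lhs => rw [← List.take_append_drop j0 (W1 hqt htr ξ σ)]
    congr 1
    rw [List.drop_eq_getElem_cons hj0]
    congr 1
    have hval : (W1 hqt htr ξ σ : List A)[j0]'hj0 = ξ (σ ⟨q + j0, by omega⟩) := by
      simp [W1]
    rw [hval]
    have he : (⟨q + j0, by omega⟩ : Fin r) = p0 := Fin.ext (by simp only; omega)
    rw [he, hp0]
  rw [hsplit]
  apply prod_splice_same
  · intro z hz
    have hz' : z ∈ W1 hqt htr ξ σ := List.mem_of_mem_drop hz
    rw [W1, List.mem_ofFn] at hz'
    obtain ⟨i, rfl⟩ := hz'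
    exact hξξ _ _
  · exact hξ0 _


lemma W2_star (σ : Perm (Fin r)) (τ : Perm (Fin t)) :
    W2 hqt htr η (tstar hqt htr σ τ) = W2 hqt htr η τ := by
  rw [W2, W2]
  apply ofFn_congr'
  intro i
  have hnm : (⟨q + 1 + i.1, by have := i.2; omega⟩ : Fin t) ∉ Lg hqt htr σ τ := by
    rw [mem_Lg]
    rintro ⟨s, hs, he⟩
    rcases eq_or_lt_of_le hs with h | h
    · rw [h, ptl_KK] at he
      have := congrArg Fin.val he
      simp only at this
      omega
    · rw [ptl_of_lt hqt htr σ τ (KK_min hqt htr σ τ h)] at he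
      have h2 := congrArg Fin.val he
      simp only at h2
      have := KK_min hqt htr σ τ h
      omega
  rw [tstar_apply_not_mem hqt htr σ τ hnm]

lemma X_star (hxx : ∀ j j' i i', Commute (x j i) (x j' i'))
    (σ : Perm (Fin r)) (τ : Perm (Fin t)) :
    (X1 hqt htr x (istar hqt htr σ τ)).prod * (X2 hqt htr x (tstar hqt htr σ τ)).prod
      = (X1 hqt htr x σ).prod * (X2 hqt htr x τ).prod := by
  rw [X1, X2, X1, X2, ofFn_prod_mul_ofFn_prod _ _ (fun i j => hxx _ _ _ _),
    ofFn_prod_mul_ofFn_prod _ _ (fun i j => hxx _ _ _ _)]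
  refine congrArg List.prod (ofFn_congr' fun j => ?_)
  by_cases hz : (⟨j.1, lt_of_lt_of_le (lt_trans j.2 hqt) htr⟩ : Fin r) ∈ Ld hqt htr σ τ
  · rw [mem_Ld] at hz
    obtain ⟨i, hi, hchn⟩ := hz
    have hvlt : (chn hqt htr σ τ i).1 < q := by rw [hchn]; exact j.2
    have hiK : i < KK hqt htr σ τ := by
      rcases eq_or_lt_of_le hi with h | h
      · exfalso; apply KK_spec hqt htr σ τ; rw [← h]; exact hvlt
      · exact h
    have hzt : (⟨j.1, lt_trans j.2 hqt⟩ : Fin t) = ptl hqt htr σ τ i := by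
      rw [ptl_of_lt hqt htr σ τ hvlt]
      exact Fin.ext (congrArg Fin.val hchn).symm
    have h1 : istar hqt htr σ τ ⟨j.1, lt_of_lt_of_le (lt_trans j.2 hqt) htr⟩
        = Fin.castLE htr (τ (ptl hqt htr σ τ i)) := by
      rw [← hchn]; exact istar_apply_lt hqt htr σ τ hiK
    rcases Nat.eq_zero_or_pos i with h0 | h0
    · subst h0
      have h2 : tstar hqt htr σ τ ⟨j.1, lt_trans j.2 hqt⟩ = τ ⟨q, hqt⟩ := by
        rw [hzt]; exact tstar_apply_zero hqt htr σ τ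
      have h3 : σ ⟨j.1, lt_of_lt_of_le (lt_trans j.2 hqt) htr⟩
          = Fin.castLE htr (τ ⟨q, hqt⟩) := by
        rw [← hchn, chn_zero]; exact σ.apply_symm_apply _
      rw [h1, h2, h3, hzt]
      exact (hxx _ _ _ _).eq
    · obtain ⟨i', rfl⟩ : ∃ i', i = i' + 1 := ⟨i - 1, by omega⟩
      have hvlt' : (chn hqt htr σ τ i').1 < q := KK_min hqt htr σ τ (by omega)
      have h2 : tstar hqt htr σ τ ⟨j.1, lt_trans j.2 hqt⟩ = τ (ptl hqt htr σ τ i') := by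
        rw [hzt]; exact tstar_apply_succ hqt htr σ τ (by omega)
      have h3 : σ ⟨j.1, lt_of_lt_of_le (lt_trans j.2 hqt) htr⟩
          = Fin.castLE htr (τ (ptl hqt htr σ τ i')) := by
        rw [← hchn, chn_succ_of_lt hqt htr σ τ hvlt', ptl_of_lt hqt htr σ τ hvlt']
        exact σ.apply_symm_apply _
      rw [h1, h2, h3, hzt]
      exact (hxx _ _ _ _).eq
  · have h1 : istar hqt htr σ τ ⟨j.1, lt_of_lt_of_le (lt_trans j.2 hqt) htr⟩
        = σ ⟨j.1, lt_of_lt_of_le (lt_trans j.2 hqt) htr⟩ :=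
      istar_apply_not_mem hqt htr σ τ hz
    have hnt : (⟨j.1, lt_trans j.2 hqt⟩ : Fin t) ∉ Lg hqt htr σ τ := by
      rw [mem_Lg]
      rintro ⟨s, hs, he⟩
      rcases eq_or_lt_of_le hs with h | h
      · rw [h, ptl_KK] at he
        have h2 := congrArg Fin.val he
        simp only at h2
        have := j.2
        omega
      · rw [ptl_of_lt hqt htr σ τ (KK_min hqt htr σ τ h)] at he
        apply hz
        rw [mem_Ld]
        refine ⟨s, by omega, Fin.ext ?_⟩
        have h2 := congrArg Fin.val he
        simpa using h2
    rw [h1, tstar_apply_not_mem hqt htr σ τ hnt]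

lemma oddpart (hξξ : ∀ i i', ξ i * ξ i' = - (ξ i' * ξ i))
    (σ : Perm (Fin r)) (τ : Perm (Fin t)) (hB : (chn hqt htr σ τ 0).1 < q) :
    (W1 hqt htr ξ σ).prod * ξ (mm hqt htr τ)
      + (W1 hqt htr ξ (istar hqt htr σ τ)).prod * ξ (mm hqt htr (tstar hqt htr σ τ)) = 0 := by
  have hK1 : 1 ≤ KK hqt htr σ τ := KK_pos hqt htr σ τ hB
  have hql : q ≤ (chn hqt htr σ τ (KK hqt htr σ τ)).1 := not_lt.mp (KK_spec hqt htr σ τ)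
  have hlr : (chn hqt htr σ τ (KK hqt htr σ τ)).1 < r := (chn hqt htr σ τ (KK hqt htr σ τ)).2
  have hmstar : mm hqt htr (tstar hqt htr σ τ)
      = Fin.castLE htr (τ (ptl hqt htr σ τ (KK hqt htr σ τ - 1))) := by
    rw [mm]
    congr 1
    have h1 : (⟨q, hqt⟩ : Fin t) = ptl hqt htr σ τ ((KK hqt htr σ τ - 1) + 1) := by
      rw [show KK hqt htr σ τ - 1 + 1 = KK hqt htr σ τ by omega, ptl_KK]
    rw [h1]
    exact tstar_apply_succ hqt htr σ τ (by omega)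
  have h3 : (chn hqt htr σ τ (KK hqt htr σ τ - 1)).1 < q := KK_min hqt htr σ τ (by omega)
  have ha : σ (chn hqt htr σ τ (KK hqt htr σ τ))
      = Fin.castLE htr (τ (ptl hqt htr σ τ (KK hqt htr σ τ - 1))) := by
    conv_lhs => rw [show KK hqt htr σ τ = (KK hqt htr σ τ - 1) + 1 by omega,
      chn_succ_of_lt hqt htr σ τ h3]
    rw [show ∀ y, σ (σ⁻¹ y) = y from σ.apply_symm_apply, ptl_of_lt hqt htr σ τ h3]
  have hb : istar hqt htr σ τ (chn hqt htr σ τ (KK hqt htr σ τ)) = mm hqt htr τ := by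
    rw [mm]; exact istar_apply_last hqt htr σ τ
  have hlen : ∀ σ' : Perm (Fin r), (W1 hqt htr ξ σ' : List A).length = r - q := by
    intro σ'; simp [W1]
  have hj0r : (chn hqt htr σ τ (KK hqt htr σ τ)).1 - q < r - q := by omega
  have hbd1 : (chn hqt htr σ τ (KK hqt htr σ τ)).1 - q
      < (W1 hqt htr ξ σ : List A).length := by rw [hlen]; omega
  have hbd2 : (chn hqt htr σ τ (KK hqt htr σ τ)).1 - q
      < (W1 hqt htr ξ (istar hqt htr σ τ) : List A).length := by rw [hlen]; omega
  -- a point with val ≥ q not equal to chn KK is not in Ld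
  have hnm : ∀ n : ℕ, (hn : q + n < r) → n ≠ (chn hqt htr σ τ (KK hqt htr σ τ)).1 - q →
      (⟨q + n, hn⟩ : Fin r) ∉ Ld hqt htr σ τ := by
    intro n hn hne
    rw [mem_Ld]
    rintro ⟨s, hs, he⟩
    rcases eq_or_lt_of_le hs with h | h
    · rw [h] at he
      have := congrArg Fin.val he
      simp only at this
      omega
    · have := KK_min hqt htr σ τ h
      have h2 := congrArg Fin.val he
      simp only at h2
      omega
  have h_take : (W1 hqt htr ξ (istar hqt htr σ τ)).take
        ((chn hqt htr σ τ (KK hqt htr σ τ)).1 - q)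
      = (W1 hqt htr ξ σ).take ((chn hqt htr σ τ (KK hqt htr σ τ)).1 - q) := by
    apply List.ext_getElem (by rw [List.length_take, List.length_take, hlen, hlen])
    intro n h1 h2
    have hn1 : n < (chn hqt htr σ τ (KK hqt htr σ τ)).1 - q := by
      rw [List.length_take] at h1; omega
    have hnrq : n < r - q := by omega
    rw [List.getElem_take, List.getElem_take]
    simp only [W1, List.getElem_ofFn]
    congr 1
    exact istar_apply_not_mem hqt htr σ τ (hnm n (by omega) (by omega))
  have h_drop : (W1 hqt htr ξ (istar hqt htr σ τ)).drop
        ((chn hqt htr σ τ (KK hqt htr σ τ)).1 - q + 1)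
      = (W1 hqt htr ξ σ).drop ((chn hqt htr σ τ (KK hqt htr σ τ)).1 - q + 1) := by
    apply List.ext_getElem (by rw [List.length_drop, List.length_drop, hlen, hlen])
    intro n h1 h2
    have hn1 : (chn hqt htr σ τ (KK hqt htr σ τ)).1 - q + 1 + n < r - q := by
      rw [List.length_drop, hlen] at h1; omega
    rw [List.getElem_drop, List.getElem_drop]
    simp only [W1, List.getElem_ofFn]
    congr 1
    exact istar_apply_not_mem hqt htr σ τ (hnm _ (by omega) (by omega))
  have hs1 : W1 hqt htr ξ σ
      = (W1 hqt htr ξ σ).take ((chn hqt htr σ τ (KK hqt htr σ τ)).1 - q)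
        ++ ξ (σ (chn hqt htr σ τ (KK hqt htr σ τ)))
          :: (W1 hqt htr ξ σ).drop ((chn hqt htr σ τ (KK hqt htr σ τ)).1 - q + 1) := by
    conv_lhs => rw [← List.take_append_drop ((chn hqt htr σ τ (KK hqt htr σ τ)).1 - q)
      (W1 hqt htr ξ σ)]
    congr 1
    rw [List.drop_eq_getElem_cons hbd1]
    congr 1
    have hval : (W1 hqt htr ξ σ : List A)[(chn hqt htr σ τ (KK hqt htr σ τ)).1 - q]'hbd1
        = ξ (σ ⟨q + ((chn hqt htr σ τ (KK hqt htr σ τ)).1 - q), by omega⟩) := by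
      simp [W1]
    rw [hval]
    congr 2
    exact Fin.ext (by simp only; omega)
  have hs2 : W1 hqt htr ξ (istar hqt htr σ τ)
      = (W1 hqt htr ξ σ).take ((chn hqt htr σ τ (KK hqt htr σ τ)).1 - q)
        ++ ξ (mm hqt htr τ)
          :: (W1 hqt htr ξ σ).drop ((chn hqt htr σ τ (KK hqt htr σ τ)).1 - q + 1) := by
    conv_lhs => rw [← List.take_append_drop ((chn hqt htr σ τ (KK hqt htr σ τ)).1 - q)
      (W1 hqt htr ξ (istar hqt htr σ τ))]
    rw [List.drop_eq_getElem_cons hbd2, h_take, h_drop]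
    congr 2
    have hval : (W1 hqt htr ξ (istar hqt htr σ τ) : List A)[(chn hqt htr σ τ
          (KK hqt htr σ τ)).1 - q]'hbd2
        = ξ (istar hqt htr σ τ ⟨q + ((chn hqt htr σ τ (KK hqt htr σ τ)).1 - q), by omega⟩) := by
      simp [W1]
    rw [hval, ← hb]
    congr 2
    exact Fin.ext (by simp only; omega)
  rw [hs1, hs2, hmstar, ← ha]
  apply prod_splice_swap
  · intro z hz
    have hz' : z ∈ W1 hqt htr ξ σ := List.mem_of_mem_drop hz
    rw [W1, List.mem_ofFn] at hz'
    obtain ⟨i, rfl⟩ := hz'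
    exact hξξ _ _
  · intro z hz
    have hz' : z ∈ W1 hqt htr ξ σ := List.mem_of_mem_drop hz
    rw [W1, List.mem_ofFn] at hz'
    obtain ⟨i, rfl⟩ := hz'
    exact hξξ _ _
  · exact hξξ _ _

lemma sign_star (σ : Perm (Fin r)) (τ : Perm (Fin t)) (hB : (chn hqt htr σ τ 0).1 < q) :
    Perm.sign (istar hqt htr σ τ) * Perm.sign (tstar hqt htr σ τ)
      = Perm.sign σ * Perm.sign τ := by
  have hK1 : 1 ≤ KK hqt htr σ τ := KK_pos hqt htr σ τ hB
  have hlen2 : 2 ≤ (Ld hqt htr σ τ).length := by rw [Ld_length]; omega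
  have hlen2g : 2 ≤ (Lg hqt htr σ τ).length := by rw [Lg_length]; omega
  have hd : Perm.sign ((Ld hqt htr σ τ).formPerm) = -(-1) ^ (KK hqt htr σ τ + 1) := by
    rw [(List.isCycle_formPerm (Ld_nodup hqt htr σ τ) hlen2).sign,
      List.support_formPerm_of_nodup _ (Ld_nodup hqt htr σ τ) (fun z he => by
        have := congrArg List.length he
        rw [Ld_length] at this
        simp at this
        omega),
      List.toFinset_card_of_nodup (Ld_nodup hqt htr σ τ), Ld_length]
  have hg : Perm.sign ((Lg hqt htr σ τ).formPerm) = -(-1) ^ (KK hqt htr σ τ + 1) := by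
    rw [(List.isCycle_formPerm (Lg_nodup hqt htr σ τ) hlen2g).sign,
      List.support_formPerm_of_nodup _ (Lg_nodup hqt htr σ τ) (fun z he => by
        have := congrArg List.length he
        rw [Lg_length] at this
        simp at this
        omega),
      List.toFinset_card_of_nodup (Lg_nodup hqt htr σ τ), Lg_length]
  rw [istar, tstar, map_mul, map_mul, map_inv, Int.units_inv_eq_self, hd, hg,
    mul_mul_mul_comm, Int.units_mul_self, mul_one]

end Val


lemma zsmul_mul_zsmul {A : Type*} [Ring A] (m n : ℤ) (a b : A) :
    (m • a) * (n • b) = (m * n) • (a * b) := by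
  rw [smul_mul_assoc, mul_smul_comm, smul_smul]

open Equiv in
def gmap {q t r : ℕ} (hqt : q < t) (htr : t ≤ r) :
    Perm (Fin r) × Perm (Fin t) → Perm (Fin r) × Perm (Fin t) :=
  fun p => if (chn hqt htr p.1 p.2 0).1 < q then
    (istar hqt htr p.1 p.2, tstar hqt htr p.1 p.2) else p

end SuperDet

/-- The ordered determinant of a square array with entries in a (possibly
noncommutative) ring: `∑_σ sign σ • a 0 (σ 0) * a 1 (σ 1) * ⋯ * a (s-1) (σ (s-1))`,
the factors being multiplied in increasing order of the row index. -/
noncomputable def odet {A : Type*} [Ring A] {s : ℕ} (a : Fin s → Fin s → A) : A :=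
  ∑ σ : Equiv.Perm (Fin s),
    ((Equiv.Perm.sign σ : ℤ) • (List.ofFn fun i => a i (σ i)).prod)

open SuperDet Equiv Equiv.Perm in
/-- Lemma 7.1 ('identity'): the product of the two super-determinants vanishes. -/
theorem superdeterminant_identity
    (A : Type*) [Ring A] [Algebra ℂ A]
    (q t r : ℕ) (hqt : q < t) (htr : t ≤ r)
    (x : Fin q → Fin r → A) (ξ η : Fin r → A)
    (hxx : ∀ j j' i i', Commute (x j i) (x j' i'))
    (hxξ : ∀ j i i', Commute (x j i) (ξ i'))
    (hxη : ∀ j i i', Commute (x j i) (η i'))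
    (hξξ : ∀ i i', ξ i * ξ i' = - (ξ i' * ξ i))
    (hηη : ∀ i i', η i * η i' = - (η i' * η i))
    (hξη : ∀ i i', ξ i * η i' = - (η i' * ξ i))
    (hξ0 : ∀ i, ξ i * ξ i = 0)
    (hη0 : ∀ i, η i * η i = 0) :
    odet (fun (k : Fin r) (i : Fin r) =>
        if h : (k : ℕ) < q then x ⟨k, h⟩ i else ξ i) *
      odet (fun (k : Fin t) (i : Fin t) =>
        if h : (k : ℕ) < q then x ⟨k, h⟩ (Fin.castLE htr i)
        else if (k : ℕ) = q then ξ (Fin.castLE htr i)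
        else η (Fin.castLE htr i)) = 0 := by
  classical
  have e1 : odet (fun (k : Fin r) (i : Fin r) =>
      if h : (k : ℕ) < q then x ⟨k, h⟩ i else ξ i)
      = ∑ σ : Perm (Fin r), ((Perm.sign σ : ℤ) • (L1 x ξ σ).prod) := rfl
  have e2 : odet (fun (k : Fin t) (i : Fin t) =>
      if h : (k : ℕ) < q then x ⟨k, h⟩ (Fin.castLE htr i)
      else if (k : ℕ) = q then ξ (Fin.castLE htr i)
      else η (Fin.castLE htr i))
      = ∑ τ : Perm (Fin t), ((Perm.sign τ : ℤ) • (L2 hqt htr x ξ η τ).prod) := rfl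
  rw [e1, e2, Finset.sum_mul_sum, ← Finset.sum_product']
  -- the summand, as a function of the pair
  have key : ∀ p : Perm (Fin r) × Perm (Fin t),
      ((Perm.sign p.1 : ℤ) • (L1 x ξ p.1).prod) * ((Perm.sign p.2 : ℤ)
        • (L2 hqt htr x ξ η p.2).prod)
      = ((Perm.sign p.1 : ℤ) * (Perm.sign p.2 : ℤ))
        • ((L1 x ξ p.1).prod * (L2 hqt htr x ξ η p.2).prod) :=
    fun p => zsmul_mul_zsmul _ _ _ _
  have FA : ∀ (σ : Perm (Fin r)) (τ : Perm (Fin t)), ¬ (chn hqt htr σ τ 0).1 < q →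
      (L1 x ξ σ).prod * (L2 hqt htr x ξ η τ).prod = 0 := by
    intro σ τ hA
    rw [V_eq hqt htr x ξ η hxξ σ τ, caseA hqt htr ξ hξξ hξ0 σ τ hA, zero_mul, mul_zero]
  have FB : ∀ (σ : Perm (Fin r)) (τ : Perm (Fin t)), (chn hqt htr σ τ 0).1 < q →
      (L1 x ξ σ).prod * (L2 hqt htr x ξ η τ).prod
        + (L1 x ξ (istar hqt htr σ τ)).prod
          * (L2 hqt htr x ξ η (tstar hqt htr σ τ)).prod = 0 := by
    intro σ τ hB
    rw [V_eq hqt htr x ξ η hxξ σ τ, V_eq hqt htr x ξ η hxξ _ _,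
      X_star hqt htr x hxx σ τ, W2_star hqt htr η σ τ, ← mul_add, ← add_mul,
      oddpart hqt htr ξ hξξ σ τ hB, zero_mul, mul_zero]
  apply Finset.sum_ninvolution (gmap hqt htr)
  · -- f a + f (g a) = 0
    intro p
    by_cases hB : (chn hqt htr p.1 p.2 0).1 < q
    · have hg : gmap hqt htr p = (istar hqt htr p.1 p.2, tstar hqt htr p.1 p.2) :=
        if_pos hB
      rw [hg, key, key]
      have hs : ((Perm.sign (istar hqt htr p.1 p.2) : ℤ)
          * (Perm.sign (tstar hqt htr p.1 p.2) : ℤ))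
          = (Perm.sign p.1 : ℤ) * (Perm.sign p.2 : ℤ) := by
        have := congrArg (fun u : ℤˣ => (u : ℤ)) (sign_star hqt htr p.1 p.2 hB)
        simpa using this
      simp only
      rw [hs, ← smul_add, FB p.1 p.2 hB, smul_zero]
    · have hg : gmap hqt htr p = p := if_neg hB
      rw [hg, key, FA p.1 p.2 hB, smul_zero, add_zero]
  · -- f a ≠ 0 → g a ≠ a
    intro p hf
    by_cases hB : (chn hqt htr p.1 p.2 0).1 < q
    · have hg : gmap hqt htr p = (istar hqt htr p.1 p.2, tstar hqt htr p.1 p.2) :=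
        if_pos hB
      rw [hg]
      intro he
      have hts : tstar hqt htr p.1 p.2 = p.2 := congrArg Prod.snd he
      have hne : tstar hqt htr p.1 p.2 ⟨q, hqt⟩ = p.2 ⟨q, hqt⟩ := by rw [hts]
      have hK1 : 1 ≤ KK hqt htr p.1 p.2 := KK_pos hqt htr p.1 p.2 hB
      have h1 : (⟨q, hqt⟩ : Fin t) = ptl hqt htr p.1 p.2 ((KK hqt htr p.1 p.2 - 1) + 1) := by
        rw [show KK hqt htr p.1 p.2 - 1 + 1 = KK hqt htr p.1 p.2 by omega, ptl_KK]
      rw [h1, tstar_apply_succ hqt htr p.1 p.2 (by omega)] at hne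
      have h2 := p.2.injective hne
      have h4 := ptl_inj_le hqt htr p.1 p.2
        (show KK hqt htr p.1 p.2 - 1 ≤ KK hqt htr p.1 p.2 by omega)
        (show KK hqt htr p.1 p.2 - 1 + 1 ≤ KK hqt htr p.1 p.2 by omega) h2
      omega
    · exact absurd (by rw [key, FA p.1 p.2 hB, smul_zero]) hf
  · -- g a ∈ s
    intro p
    simp [Finset.mem_product]
  · -- g (g a) = a
    intro p
    by_cases hB : (chn hqt htr p.1 p.2 0).1 < q
    · have hg : gmap hqt htr p = (istar hqt htr p.1 p.2, tstar hqt htr p.1 p.2) :=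
        if_pos hB
      rw [hg, gmap, if_pos (hB_star hqt htr p.1 p.2 hB)]
      simp only [istar_istar hqt htr p.1 p.2 hB, tstar_tstar hqt htr p.1 p.2 hB]
    · have hg : gmap hqt htr p = p := if_neg hB
      rw [hg, hg]
end

section
/- Let A be an associative unital ℂ-algebra, and let q, p, t, r be natural numbers with q < t ≤ r and q + 1 + p ≤ t. Let x : Fin q → Fin r → A, y : Fin p → Fin r → A, and ξ, η : Fin r → A be families of elements of A such that: any two elements among the x j i and the y j i commute; every x j i and every y j i commutes with every ξ i' and with every η i'; ξ i * ξ i' = - ξ i' * ξ i, η i * η i' = - η i' * η i, and ξ i * η i' = - η i' * ξ i for all i, i'; and ξ i * ξ i = 0 and η i * η i = 0 for all i. Let D₁ be the ordered determinant of the r×r matrix whose k-th row is (x k 0, …, x k (r-1)) for k < q and is (ξ 0, …, ξ (r-1)) for q ≤ k < r, and let D₂ be the ordered determinant of the t×t matrix whose k-th row is (x k 0, …, x k (t-1)) for k < q, is (ξ 0, …, ξ (t-1)) for k = q, is (y (k-q-1) 0, …, y (k-q-1) (t-1)) for q < k ≤ q + p, and is (η 0, …, η (t-1)) for q + p < k <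 t. Then D₁ * D₂ = 0 in A. -/
set_option linter.unusedSectionVars false
set_option maxHeartbeats 1000000

section Helpers
variable {A : Type*} [Ring A]

lemma mul_list_prod_sign (c : A) (ε : ℤ) (L : List A)
    (h : ∀ a ∈ L, c * a = ε • (a * c)) :
    c * L.prod = ε ^ L.length • (L.prod * c) := by
  induction L with
  | nil => simp
  | cons a L ih =>
    have ha : c * a = ε • (a * c) := h a List.mem_cons_self
    have hL : ∀ b ∈ L, c * b = ε • (b * c) := fun b hb => h b (List.mem_cons_of_mem _ hb)
    calc c * (a :: L).prod = (c * a) * L.prod := by rw [List.prod_cons, mul_assoc]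
      _ = ε • (a * (c * L.prod)) := by rw [ha, smul_mul_assoc, mul_assoc]
      _ = ε • (a * (ε ^ L.length • (L.prod * c))) := by rw [ih hL]
      _ = ε ^ (a :: L).length • ((a :: L).prod * c) := by
          rw [mul_smul_comm, smul_smul, List.length_cons, List.prod_cons, pow_succ, mul_assoc]
          ring_nf

lemma commute_odet (a : A) {s : ℕ} (M : Fin s → Fin s → A)
    (h : ∀ m i, Commute a (M m i)) : Commute a (odet M) := by
  refine Commute.sum_right _ _ _ fun σ _ => ?_
  rw [zsmul_eq_mul]
  exact (Int.commute_cast a _).mul_right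
    (Commute.list_prod_right _ _ (by
      intro b hb
      rw [List.mem_ofFn] at hb
      obtain ⟨i, rfl⟩ := hb
      exact h i (σ i)))

lemma eq_zero_of_self_eq_neg [Algebra ℂ A] (S : A) (h : S = -S) : S = 0 := by
  have h2 : (2 : ℂ) • S = 0 := by
    have hss : S + S = 0 := by nth_rewrite 1 [h]; abel
    rw [two_smul]; exact hss
  have := congrArg (fun z => (2 : ℂ)⁻¹ • z) h2
  simpa [smul_smul] using this

lemma ofFn_prod_split {s : ℕ} (f : Fin s → A) (k : Fin s) :
    (List.ofFn f).prod =
      ((List.ofFn f).take k.val).prod * (f k * ((List.ofFn f).drop (k.val + 1)).prod) := by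
  have hk : k.val < (List.ofFn f).length := by simp [k.isLt]
  conv_lhs => rw [← List.take_append_drop k.val (List.ofFn f)]
  rw [List.prod_append, List.drop_eq_getElem_cons hk, List.prod_cons]
  simp

lemma take_drop_succAbove {s : ℕ} (f : Fin (s + 1) → A) (k : Fin (s + 1)) :
    List.ofFn (fun m => f (k.succAbove m)) =
      (List.ofFn f).take k.val ++ (List.ofFn f).drop (k.val + 1) := by
  apply List.ext_getElem
  · simp; omega
  intro n h1 h2
  have hk : k.val ≤ s := by omega
  have hlen : n < s := by simpa using h1
  by_cases hn : n < k.val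
  · rw [List.getElem_append_left (by simpa using hn)]
    simp only [List.getElem_take, List.getElem_ofFn]
    congr 1
    have : (⟨n, hlen⟩ : Fin s).castSucc < k := by
      simp [Fin.lt_def, hn]
    rw [Fin.succAbove_of_castSucc_lt _ _ this]
    rfl
  · have hlt : k.val ≤ n := by omega
    rw [List.getElem_append_right (by simpa using hlt)]
    simp only [List.getElem_drop, List.getElem_ofFn]
    have hlen2 : min k.val s = k.val := by omega
    congr 1
    have : k ≤ (⟨n, hlen⟩ : Fin s).castSucc := by
      simp [Fin.le_def]; omega
    rw [Fin.succAbove_of_le_castSucc _ _ this]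
    apply Fin.ext
    simp [hlen2]
    omega

lemma ofFn_prod_extract {s : ℕ} (f : Fin (s + 1) → A) (k : Fin (s + 1)) (ε : ℤ)
    (h : ∀ m, k < m → f k * f m = ε • (f m * f k)) :
    (List.ofFn f).prod
      = ε ^ (s - k.val) • ((List.ofFn (fun m => f (k.succAbove m))).prod * f k) := by
  have hdrop : ∀ a ∈ (List.ofFn f).drop (k.val + 1), f k * a = ε • (a * f k) := by
    intro a ha
    rw [List.mem_iff_getElem] at ha
    obtain ⟨n, hn, rfl⟩ := ha
    have hn' : n < s - k.val := by simpa using hn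
    rw [List.getElem_drop, List.getElem_ofFn]
    exact h _ (by simp only [Fin.lt_def]; omega)
  have hlen : ((List.ofFn f).drop (k.val + 1)).length = s - k.val := by
    simp only [List.length_drop, List.length_ofFn]; omega
  rw [ofFn_prod_split f k, mul_list_prod_sign (f k) ε _ hdrop, hlen,
    take_drop_succAbove, List.prod_append]
  rw [mul_smul_comm, mul_assoc]

lemma odet_eq_zero_of_col_eq [Algebra ℂ A] {s : ℕ} (M : Fin s → Fin s → A) (c d : Fin s)
    (hcd : c ≠ d) (h : ∀ m, M m c = M m d) : odet M = 0 := by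
  apply eq_zero_of_self_eq_neg
  have hM : ∀ m z, M m (Equiv.swap c d z) = M m z := by
    intro m z
    by_cases h1 : z = c
    · subst h1; rw [Equiv.swap_apply_left]; exact (h m).symm
    by_cases h2 : z = d
    · subst h2; rw [Equiv.swap_apply_right]; exact h m
    · rw [Equiv.swap_apply_of_ne_of_ne h1 h2]
  calc odet M = ∑ σ : Equiv.Perm (Fin s),
        ((Equiv.Perm.sign (Equiv.swap c d * σ) : ℤ)
          • (List.ofFn fun i => M i ((Equiv.swap c d * σ) i)).prod) := by
        rw [odet]
        exact (Fintype.sum_equiv (Equiv.mulLeft (Equiv.swap c d)) _ _ (fun σ => rfl)).symm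
    _ = -odet M := by
        rw [odet, ← Finset.sum_neg_distrib]
        apply Finset.sum_congr rfl
        intro σ _
        rw [Equiv.Perm.sign_mul, Equiv.Perm.sign_swap hcd]
        have hl : (List.ofFn fun i => M i ((Equiv.swap c d * σ) i))
            = (List.ofFn fun i => M i (σ i)) := by
          congr 1
          funext i
          exact hM i (σ i)
        rw [hl]
        push_cast
        rw [neg_mul, neg_smul, one_mul]

lemma list_prod_swap (u v : A) (P Q R : List A) (huv : Commute u v)
    (hu : ∀ b ∈ Q, Commute u b) (hv : ∀ b ∈ Q, Commute v b) :
    (P ++ u :: (Q ++ v :: R)).prod = (P ++ v :: (Q ++ u :: R)).prod := by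
  simp only [List.prod_append, List.prod_cons]
  congr 1
  have key : ∀ (a b : A), (∀ c ∈ Q, Commute a c) →
      a * (Q.prod * (b * R.prod)) = Q.prod * (a * (b * R.prod)) := by
    intro a b ha
    rw [← mul_assoc, (Commute.list_prod_right Q a ha).eq, mul_assoc]
  rw [key u v hu, key v u hv]
  congr 1
  rw [← mul_assoc, ← mul_assoc, huv.eq]

lemma ofFn_decomp {s : ℕ} (f : Fin s → A) (k l : Fin s) (hkl : k.val < l.val) :
    List.ofFn f =
      ((List.ofFn f).take k.val) ++ f k ::
        ((((List.ofFn f).drop (k.val + 1)).take (l.val - k.val - 1)) ++ f l ::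
          ((List.ofFn f).drop (l.val + 1))) := by
  have h1 : k.val < (List.ofFn f).length := by simp
  have h2 : l.val < (List.ofFn f).length := by simp
  conv_lhs => rw [← List.take_append_drop k.val (List.ofFn f),
    List.drop_eq_getElem_cons h1]
  congr 1
  rw [List.getElem_ofFn]
  congr 1
  conv_lhs => rw [← List.take_append_drop (l.val - k.val - 1) ((List.ofFn f).drop (k.val + 1))]
  congr 1
  rw [List.drop_drop]
  have hd : k.val + 1 + (l.val - k.val - 1) = l.val := by omega
  rw [hd, List.drop_eq_getElem_cons h2, List.getElem_ofFn]

lemma ofFn_prod_eq_of_swap {s : ℕ} (f g : Fin s → A) (k l : Fin s) (hkl : k.val < l.val)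
    (hfg : ∀ m, m ≠ k → m ≠ l → f m = g m) (hfk : f k = g l) (hfl : f l = g k)
    (hcomm : ∀ m, Commute (f k) (f m)) (hcomm' : ∀ m, Commute (f l) (f m)) :
    (List.ofFn f).prod = (List.ofFn g).prod := by
  have htake : (List.ofFn f).take k.val = (List.ofFn g).take k.val := by
    apply List.ext_getElem (by simp)
    intro n hn hn'
    simp only [List.getElem_take, List.getElem_ofFn]
    have hnk : n < k.val := by simp at hn; omega
    apply hfg <;> · intro hh; have := congrArg Fin.val hh; simp at this; omega
  have hmid : ((List.ofFn f).drop (k.val + 1)).take (l.val - k.val - 1)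
      = ((List.ofFn g).drop (k.val + 1)).take (l.val - k.val - 1) := by
    apply List.ext_getElem (by simp)
    intro n hn hn'
    simp only [List.getElem_take, List.getElem_drop, List.getElem_ofFn]
    have hn2 : n < l.val - k.val - 1 := by simp at hn; omega
    apply hfg <;> · intro hh; have := congrArg Fin.val hh; simp at this; omega
  have hdrop : (List.ofFn f).drop (l.val + 1) = (List.ofFn g).drop (l.val + 1) := by
    apply List.ext_getElem (by simp)
    intro n hn hn'
    simp only [List.getElem_drop, List.getElem_ofFn]
    apply hfg <;> · intro hh; have := congrArg Fin.val hh; simp at this; omega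
  have hgc : ∀ m, Commute (f k) (g m) := by
    intro m
    by_cases h1 : m = k
    · subst h1; rw [← hfl]; exact hcomm l
    by_cases h2 : m = l
    · subst h2; rw [← hfk]
    · rw [← hfg m h1 h2]; exact hcomm m
  have hgc' : ∀ m, Commute (f l) (g m) := by
    intro m
    by_cases h1 : m = k
    · subst h1; rw [← hfl]
    by_cases h2 : m = l
    · subst h2; rw [← hfk]; exact hcomm' k
    · rw [← hfg m h1 h2]; exact hcomm' m
  rw [ofFn_decomp f k l hkl, ofFn_decomp g k l hkl, htake, hmid, hdrop, ← hfk, ← hfl]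
  apply list_prod_swap _ _ _ _ _ (hcomm l)
  · intro b hb
    have hb2 : b ∈ List.ofFn g := List.mem_of_mem_drop (List.mem_of_mem_take hb)
    rw [List.mem_ofFn] at hb2
    obtain ⟨m, rfl⟩ := hb2
    exact hgc m
  · intro b hb
    have hb2 : b ∈ List.ofFn g := List.mem_of_mem_drop (List.mem_of_mem_take hb)
    rw [List.mem_ofFn] at hb2
    obtain ⟨m, rfl⟩ := hb2
    exact hgc' m

lemma odet_eq_zero_of_row_eq [Algebra ℂ A] {s : ℕ} (M : Fin s → Fin s → A) (k l : Fin s)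
    (hkl : k ≠ l) (hrow : ∀ c, M k c = M l c)
    (hc : ∀ c m c', Commute (M k c) (M m c')) : odet M = 0 := by
  have hcl : ∀ c m c', Commute (M l c) (M m c') := by
    intro c m c'; rw [← hrow]; exact hc c m c'
  have hprod : ∀ σ : Equiv.Perm (Fin s),
      (List.ofFn fun m => M m ((σ * Equiv.swap k l) m)).prod
        = (List.ofFn fun m => M m (σ m)).prod := by
    intro σ
    set f := fun m => M m ((σ * Equiv.swap k l) m) with hf
    set g := fun m => M m (σ m) with hg
    have hfg : ∀ m, m ≠ k → m ≠ l → f m = g m := by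
      intro m h1 h2
      simp only [hf, hg, Equiv.Perm.mul_apply, Equiv.swap_apply_of_ne_of_ne h1 h2]
    have hfk : f k = M k (σ l) := by simp [hf]
    have hfl : f l = M l (σ k) := by simp [hf]
    have hgk : g k = M k (σ k) := rfl
    have hgl : g l = M l (σ l) := rfl
    rcases Nat.lt_or_ge k.val l.val with hlt | hge
    · apply ofFn_prod_eq_of_swap f g k l hlt hfg
      · rw [hfk, hgl, hrow]
      · rw [hfl, hgk, hrow]
      · intro m; rw [hfk]; exact hc _ _ _
      · intro m; rw [hfl]; exact hcl _ _ _
    · have hlt : l.val < k.val := by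
        rcases Nat.lt_or_ge l.val k.val with h | h
        · exact h
        · exact absurd (Fin.ext (by omega)) hkl
      apply ofFn_prod_eq_of_swap f g l k hlt
        (fun m h1 h2 => hfg m h2 h1)
      · rw [hfl, hgk, hrow]
      · rw [hfk, hgl, hrow]
      · intro m; rw [hfl]; exact hcl _ _ _
      · intro m; rw [hfk]; exact hc _ _ _
  apply eq_zero_of_self_eq_neg
  calc odet M = ∑ σ : Equiv.Perm (Fin s),
      ((Equiv.Perm.sign (σ * Equiv.swap k l) : ℤ)
        • (List.ofFn fun i => M i ((σ * Equiv.swap k l) i)).prod) := by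
        rw [odet]
        exact (Fintype.sum_equiv (Equiv.mulRight (Equiv.swap k l)) _ _ (fun σ => rfl)).symm
    _ = -odet M := by
        rw [odet, ← Finset.sum_neg_distrib]
        apply Finset.sum_congr rfl
        intro σ _
        rw [Equiv.Perm.sign_mul, Equiv.Perm.sign_swap hkl, hprod σ]
        push_cast
        rw [mul_neg, mul_one, neg_smul]

end Helpers

def psiMap {s : ℕ} (k : Fin (s + 1)) (π : Equiv.Perm (Fin s)) : Equiv.Perm (Fin (s + 1)) :=
  Equiv.Perm.decomposeFin.symm (0, π) * (Fin.cycleRange k)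

lemma psiMap_apply_self {s : ℕ} (k : Fin (s + 1)) (π : Equiv.Perm (Fin s)) :
    psiMap k π k = 0 := by
  simp [psiMap, Equiv.Perm.mul_apply, Fin.cycleRange_self]

lemma psiMap_apply_succAbove {s : ℕ} (k : Fin (s + 1)) (π : Equiv.Perm (Fin s)) (m : Fin s) :
    psiMap k π (k.succAbove m) = (π m).succ := by
  simp [psiMap, Equiv.Perm.mul_apply, Fin.cycleRange_succAbove]

lemma psiMap_sign {s : ℕ} (k : Fin (s + 1)) (π : Equiv.Perm (Fin s)) :
    (Equiv.Perm.sign (psiMap k π) : ℤ) = (-1) ^ (k : ℕ) * (Equiv.Perm.sign π : ℤ) := by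
  rw [psiMap, Equiv.Perm.sign_mul, Equiv.Perm.decomposeFin.symm_sign, Fin.sign_cycleRange]
  simp [mul_comm]

lemma psiMap_bijective {s : ℕ} :
    Function.Bijective (fun p : Fin (s + 1) × Equiv.Perm (Fin s) => psiMap p.1 p.2) := by
  rw [Fintype.bijective_iff_injective_and_card]
  constructor
  swap
  · simp [Fintype.card_perm, Nat.factorial_succ]
  rintro ⟨k, π⟩ ⟨k', π'⟩ h
  simp only at h
  have hk : k = k' := by
    have h1 : (psiMap k π)⁻¹ 0 = k := by
      rw [← psiMap_apply_self k π]; simp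
    have h2 : (psiMap k' π')⁻¹ 0 = k' := by
      rw [← psiMap_apply_self k' π']; simp
    rw [← h1, ← h2, h]
  subst hk
  have hπ : Equiv.Perm.decomposeFin.symm (0, π) = Equiv.Perm.decomposeFin.symm (0, π') :=
    mul_right_cancel h
  have := Equiv.Perm.decomposeFin.symm.injective hπ
  simp only [Prod.mk.injEq] at this
  exact Prod.ext rfl this.2

def rowD {A : Type*} [Ring A] (q r : ℕ) (x : Fin q → Fin r → A) (ξ : Fin r → A)
    (n : ℕ) (i : Fin r) : A :=
  if h : n < q then x ⟨n, h⟩ i else ξ i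

def Cmat {A : Type*} [Ring A] (q r : ℕ) (x : Fin q → Fin r → A) (ξ : Fin r → A) (j : Fin r)
    (m : Fin (r + 1)) (c : Fin (r + 1)) : A :=
  if hc : c = 0 then rowD q r x ξ m.val j else rowD q r x ξ m.val (c.pred hc)

section Star
variable {A : Type*} [Ring A] [Algebra ℂ A]
variable (q r : ℕ) (x : Fin q → Fin r → A) (ξ : Fin r → A) (j : Fin r)

lemma Cmat_zero (m : Fin (r + 1)) : Cmat q r x ξ j m 0 = rowD q r x ξ m.val j := by
  simp [Cmat]

lemma Cmat_succ (m : Fin (r + 1)) (i : Fin r) :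
    Cmat q r x ξ j m i.succ = rowD q r x ξ m.val i := by
  simp [Cmat, Fin.succ_ne_zero, Fin.pred_succ]

lemma Cmat_exists (m c : Fin (r + 1)) : ∃ i0 : Fin r, Cmat q r x ξ j m c = rowD q r x ξ m.val i0 := by
  by_cases hc : c = 0
  · exact ⟨j, by simp [Cmat, hc]⟩
  · exact ⟨c.pred hc, by simp [Cmat, hc]⟩

variable (hxx : ∀ j j' i i', Commute (x j i) (x j' i'))
    (hxξ : ∀ j i i', Commute (x j i) (ξ i'))
    (hξξ : ∀ i i', ξ i * ξ i' = - (ξ i' * ξ i))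

include hxx hxξ in
lemma rowD_comm (n : ℕ) (hn : n < q) (i : Fin r) (n' : ℕ) (i' : Fin r) :
    Commute (rowD q r x ξ n i) (rowD q r x ξ n' i') := by
  rw [rowD, rowD, dif_pos hn]
  by_cases h' : n' < q
  · rw [dif_pos h']; exact hxx _ _ _ _
  · rw [dif_neg h']; exact hxξ _ _ _

include hξξ in
lemma rowD_anti (n : ℕ) (hn : ¬ n < q) (i : Fin r) (n' : ℕ) (hn' : ¬ n' < q) (i' : Fin r) :
    rowD q r x ξ n i * rowD q r x ξ n' i' = - (rowD q r x ξ n' i' * rowD q r x ξ n i) := by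
  rw [rowD, rowD, dif_neg hn, dif_neg hn']
  exact hξξ _ _

include hxx hxξ hξξ in
lemma expand_lemma (hq : q ≤ r) :
    (0 : A) = ∑ k : Fin (r + 1),
      (((-1 : ℤ) ^ (k : ℕ) * (if (k : ℕ) < q then (1 : ℤ) else -1) ^ (r - (k : ℕ))) •
        ((odet fun (m : Fin r) (i : Fin r) => rowD q r x ξ ((k.succAbove m) : ℕ) i)
          * rowD q r x ξ (k : ℕ) j)) := by
  have h0 : odet (Cmat q r x ξ j) = 0 := by
    apply odet_eq_zero_of_col_eq _ 0 j.succ (Ne.symm (Fin.succ_ne_zero j))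
    intro m
    rw [Cmat_zero, Cmat_succ]
  rw [← h0, odet]
  rw [← Fintype.sum_bijective _ (psiMap_bijective (s := r))
    _ _ (fun p => rfl)]
  rw [Fintype.sum_prod_type]
  apply Finset.sum_congr rfl
  intro k _
  set ε : ℤ := if (k : ℕ) < q then (1 : ℤ) else -1 with hε
  have hprod : ∀ π : Equiv.Perm (Fin r),
      (List.ofFn fun m => Cmat q r x ξ j m (psiMap k π m)).prod
        = ε ^ (r - (k : ℕ)) •
            ((List.ofFn fun m => rowD q r x ξ ((k.succAbove m) : ℕ) (π m)).prod
              * rowD q r x ξ (k : ℕ) j) := by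
    intro π
    have hhyp : ∀ m, k < m →
        (fun m => Cmat q r x ξ j m (psiMap k π m)) k * (fun m => Cmat q r x ξ j m (psiMap k π m)) m
          = ε • ((fun m => Cmat q r x ξ j m (psiMap k π m)) m * (fun m => Cmat q r x ξ j m (psiMap k π m)) k) := by
      intro m hm
      simp only
      rw [psiMap_apply_self, Cmat_zero]
      obtain ⟨i0, hi0⟩ := Cmat_exists q r x ξ j m (psiMap k π m)
      rw [hi0]
      by_cases hkq : (k : ℕ) < q
      · rw [hε, if_pos hkq, one_smul]
        exact (rowD_comm q r x ξ hxx hxξ (k : ℕ) hkq j (m : ℕ) i0).eq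
      · rw [hε, if_neg hkq]
        have hmq : ¬ (m : ℕ) < q := by
          have : (k : ℕ) < (m : ℕ) := hm
          omega
        rw [rowD_anti q r x ξ hξξ (k : ℕ) hkq j (m : ℕ) hmq i0]
        simp
    have := ofFn_prod_extract (fun m => Cmat q r x ξ j m (psiMap k π m)) k ε hhyp
    rw [this]
    have h1 : (fun m => Cmat q r x ξ j m ((psiMap k π) m)) k = rowD q r x ξ (↑k) j := by
      simp only [psiMap_apply_self, Cmat_zero]
    have h2 : (List.ofFn fun m => (fun m' => Cmat q r x ξ j m' ((psiMap k π) m')) (k.succAbove m))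
        = List.ofFn fun m => rowD q r x ξ (↑(k.succAbove m)) (π m) :=
      congrArg List.ofFn (funext fun m => by
        simp only [psiMap_apply_succAbove, Cmat_succ])
    beta_reduce at h1 h2
    rw [h1, h2]
  calc ∑ π : Equiv.Perm (Fin r),
      ((Equiv.Perm.sign (psiMap k π) : ℤ) •
        (List.ofFn fun m => Cmat q r x ξ j m (psiMap k π m)).prod)
      = ∑ π : Equiv.Perm (Fin r),
        (((-1 : ℤ) ^ (k : ℕ) * ε ^ (r - (k : ℕ))) •
          ((Equiv.Perm.sign π : ℤ) •
            ((List.ofFn fun m => rowD q r x ξ ((k.succAbove m) : ℕ) (π m)).prod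
              * rowD q r x ξ (k : ℕ) j))) := by
        apply Finset.sum_congr rfl
        intro π _
        rw [hprod π, psiMap_sign, smul_smul, smul_smul]
        congr 1
        ring
    _ = ((-1 : ℤ) ^ (k : ℕ) * ε ^ (r - (k : ℕ))) •
        ((odet fun (m : Fin r) (i : Fin r) => rowD q r x ξ ((k.succAbove m) : ℕ) i)
          * rowD q r x ξ (k : ℕ) j) := by
        rw [← Finset.smul_sum]
        congr 1
        rw [odet, Finset.sum_mul]
        apply Finset.sum_congr rfl
        intro π _
        rw [smul_mul_assoc]

end Star

section Star2
variable {A : Type*} [Ring A] [Algebra ℂ A]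
variable (q r : ℕ) (x : Fin q → Fin r → A) (ξ : Fin r → A) (j : Fin r)
variable (hxx : ∀ j j' i i', Commute (x j i) (x j' i'))
    (hxξ : ∀ j i i', Commute (x j i) (ξ i'))
    (hξξ : ∀ i i', ξ i * ξ i' = - (ξ i' * ξ i))

lemma card_filter_not_lt (hq : q ≤ r) :
    (Finset.univ.filter (fun k : Fin (r + 1) => ¬ (k : ℕ) < q)).card = r + 1 - q := by
  have h1 : (Finset.univ.filter (fun k : Fin (r + 1) => (k : ℕ) < q)).card
      + (Finset.univ.filter (fun k : Fin (r + 1) => ¬ (k : ℕ) < q)).card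
      = Fintype.card (Fin (r + 1)) := by
    rw [← Finset.card_univ]
    exact Finset.card_filter_add_card_filter_not _
  have h2 : (Finset.univ.filter (fun k : Fin (r + 1) => (k : ℕ) < q)).card = q := by
    have := Finset.card_bij'
      (s := Finset.univ.filter (fun k : Fin (r + 1) => (k : ℕ) < q))
      (t := (Finset.univ : Finset (Fin q)))
      (i := fun k hk => (⟨(k : ℕ), (Finset.mem_filter.mp hk).2⟩ : Fin q))
      (j := fun i _ => (⟨(i : ℕ), by omega⟩ : Fin (r + 1)))
      (hi := fun k hk => Finset.mem_univ _)
      (hj := fun i _ => Finset.mem_filter.mpr ⟨Finset.mem_univ _, i.isLt⟩)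
      (left_inv := fun k hk => by apply Fin.ext; rfl)
      (right_inv := fun i _ => by apply Fin.ext; rfl)
    rw [this, Finset.card_univ, Fintype.card_fin]
  rw [Fintype.card_fin] at h1
  omega

include hxx hxξ hξξ in
lemma star_lemma (hq : q ≤ r) :
    odet (fun (m : Fin r) (i : Fin r) => rowD q r x ξ (m : ℕ) i) * ξ j
      = ∑ k ∈ Finset.univ.filter (fun k : Fin (r + 1) => (k : ℕ) < q),
          (((-1 : ℂ) ^ (r + (k : ℕ) + 1) * ((r + 1 - q : ℕ) : ℂ)⁻¹) •
            ((odet fun (m : Fin r) (i : Fin r) => rowD q r x ξ ((k.succAbove m) : ℕ) i)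
              * rowD q r x ξ (k : ℕ) j)) := by
  classical
  have hexp := expand_lemma q r x ξ j hxx hxξ hξξ hq
  rw [← Finset.sum_filter_add_sum_filter_not Finset.univ
    (fun k : Fin (r + 1) => (k : ℕ) < q)] at hexp
  set Y := odet (fun (m : Fin r) (i : Fin r) => rowD q r x ξ (m : ℕ) i) * ξ j with hY
  set XK := fun k : Fin (r + 1) =>
    ((odet fun (m : Fin r) (i : Fin r) => rowD q r x ξ ((k.succAbove m) : ℕ) i)
      * rowD q r x ξ (k : ℕ) j) with hXK
  have hDtil : ∀ k : Fin (r + 1), ¬ (k : ℕ) < q →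
      (odet fun (m : Fin r) (i : Fin r) => rowD q r x ξ ((k.succAbove m) : ℕ) i)
        = odet (fun (m : Fin r) (i : Fin r) => rowD q r x ξ (m : ℕ) i) := by
    intro k hk
    congr 1
    funext m i
    have hval : ((k.succAbove m) : ℕ) = (m : ℕ) ∨ ((k.succAbove m) : ℕ) = (m : ℕ) + 1 := by
      unfold Fin.succAbove
      split_ifs
      · left; rfl
      · right; rfl
    by_cases hm : (m : ℕ) < q
    · have hcast : m.castSucc < k := by
        rw [Fin.lt_def]
        simp only [Fin.coe_castSucc]
        omega
      have hsv : ((k.succAbove m) : ℕ) = (m : ℕ) := by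
        rw [Fin.succAbove_of_castSucc_lt _ _ hcast]
        rfl
      rw [rowD, rowD, hsv]
    · have hn : ¬ ((k.succAbove m) : ℕ) < q := by rcases hval with h | h <;> omega
      rw [rowD, rowD, dif_neg hn, dif_neg hm]
  have hterm2 : ∀ k ∈ Finset.univ.filter (fun k : Fin (r + 1) => ¬ (k : ℕ) < q),
      (((-1 : ℤ) ^ (k : ℕ) * (if (k : ℕ) < q then (1 : ℤ) else -1) ^ (r - (k : ℕ))) •
        ((odet fun (m : Fin r) (i : Fin r) => rowD q r x ξ ((k.succAbove m) : ℕ) i)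
          * rowD q r x ξ (k : ℕ) j))
        = ((-1 : ℤ) ^ r) • Y := by
    intro k hk
    have hkq : ¬ (k : ℕ) < q := (Finset.mem_filter.mp hk).2
    rw [if_neg hkq, hDtil k hkq]
    have hrow : rowD q r x ξ (k : ℕ) j = ξ j := by rw [rowD, dif_neg hkq]
    rw [hrow]
    have hpow : (-1 : ℤ) ^ (k : ℕ) * (-1 : ℤ) ^ (r - (k : ℕ)) = (-1 : ℤ) ^ r := by
      rw [← pow_add]
      congr 1
      have := k.isLt
      omega
    rw [hpow, hY]
  rw [Finset.sum_congr rfl hterm2, Finset.sum_const, card_filter_not_lt q r hq] at hexp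
  have hterm1 : ∀ k ∈ Finset.univ.filter (fun k : Fin (r + 1) => (k : ℕ) < q),
      (((-1 : ℤ) ^ (k : ℕ) * (if (k : ℕ) < q then (1 : ℤ) else -1) ^ (r - (k : ℕ))) •
        ((odet fun (m : Fin r) (i : Fin r) => rowD q r x ξ ((k.succAbove m) : ℕ) i)
          * rowD q r x ξ (k : ℕ) j))
        = ((-1 : ℂ) ^ (k : ℕ)) • XK k := by
    intro k hk
    have hkq : (k : ℕ) < q := (Finset.mem_filter.mp hk).2
    rw [if_pos hkq, one_pow, mul_one, hXK]
    rw [← Int.cast_smul_eq_zsmul ℂ]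
    push_cast
    rfl
  rw [Finset.sum_congr rfl hterm1] at hexp
  -- now hexp : 0 = ∑_{k∈filt} ((-1:ℂ)^k) • XK k + (r+1-q) • ((-1:ℤ)^r • Y)
  have hns : (r + 1 - q) • ((-1 : ℤ) ^ r • Y) = (((r + 1 - q : ℕ) : ℂ) * (-1) ^ r) • Y := by
    rw [← Int.cast_smul_eq_zsmul ℂ ((-1) ^ r) Y, ← Nat.cast_smul_eq_nsmul ℂ, smul_smul]
    push_cast
    ring_nf
  rw [hns] at hexp
  set c : ℂ := ((r + 1 - q : ℕ) : ℂ) * (-1) ^ r with hc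
  have hc0 : c ≠ 0 := by
    rw [hc]
    apply mul_ne_zero
    · exact Nat.cast_ne_zero.mpr (by omega)
    · apply pow_ne_zero; norm_num
  have hcy : c • Y = - ∑ k ∈ Finset.univ.filter (fun k : Fin (r + 1) => (k : ℕ) < q),
      ((-1 : ℂ) ^ (k : ℕ)) • XK k :=
    eq_neg_of_add_eq_zero_right hexp.symm
  have hinv : ((-1 : ℂ) ^ r)⁻¹ = (-1 : ℂ) ^ r := by
    rw [← inv_pow]
    norm_num
  calc Y = c⁻¹ • (c • Y) := by rw [smul_smul, inv_mul_cancel₀ hc0, one_smul]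
    _ = c⁻¹ • (- ∑ k ∈ Finset.univ.filter (fun k : Fin (r + 1) => (k : ℕ) < q),
          ((-1 : ℂ) ^ (k : ℕ)) • XK k) := by rw [hcy]
    _ = ∑ k ∈ Finset.univ.filter (fun k : Fin (r + 1) => (k : ℕ) < q),
          ((-(c⁻¹ * (-1 : ℂ) ^ (k : ℕ)))) • XK k := by
        rw [← Finset.sum_neg_distrib, Finset.smul_sum]
        apply Finset.sum_congr rfl
        intro k _
        rw [smul_neg, smul_smul, ← neg_smul]
    _ = ∑ k ∈ Finset.univ.filter (fun k : Fin (r + 1) => (k : ℕ) < q),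
          (((-1 : ℂ) ^ (r + (k : ℕ) + 1) * ((r + 1 - q : ℕ) : ℂ)⁻¹) • XK k) := by
        apply Finset.sum_congr rfl
        intro k _
        congr 1
        rw [hc, mul_inv, hinv, pow_add, pow_add, pow_one]
        ring
end Star2

/-- Corollary 7.3 ('keycor'): the product of the two super-determinants,
the second one containing extra even rows `y`, vanishes. -/
theorem superdeterminant_identity_with_even_rows
    (A : Type*) [Ring A] [Algebra ℂ A]
    (q p t r : ℕ) (hqt : q < t) (htr : t ≤ r) (hqpt : q + 1 + p ≤ t)
    (x : Fin q → Fin r → A) (y : Fin p → Fin r → A) (ξ η : Fin r → A)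
    (hxx : ∀ j j' i i', Commute (x j i) (x j' i'))
    (hxy : ∀ j j' i i', Commute (x j i) (y j' i'))
    (hyy : ∀ j j' i i', Commute (y j i) (y j' i'))
    (hxξ : ∀ j i i', Commute (x j i) (ξ i'))
    (hxη : ∀ j i i', Commute (x j i) (η i'))
    (hyξ : ∀ j i i', Commute (y j i) (ξ i'))
    (hyη : ∀ j i i', Commute (y j i) (η i'))
    (hξξ : ∀ i i', ξ i * ξ i' = - (ξ i' * ξ i))
    (hηη : ∀ i i', η i * η i' = - (η i' * η i))
    (hξη : ∀ i i', ξ i * η i' = - (η i' * ξ i))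
    (hξ0 : ∀ i, ξ i * ξ i = 0)
    (hη0 : ∀ i, η i * η i = 0) :
    odet (fun (k : Fin r) (i : Fin r) =>
        if h : (k : ℕ) < q then x ⟨k, h⟩ i else ξ i) *
      odet (fun (k : Fin t) (i : Fin t) =>
        if h : (k : ℕ) < q then x ⟨k, h⟩ (Fin.castLE htr i)
        else if he : (k : ℕ) = q then ξ (Fin.castLE htr i)
        else if h2 : (k : ℕ) ≤ q + p then
          y ⟨(k : ℕ) - q - 1, by omega⟩ (Fin.castLE htr i)
        else η (Fin.castLE htr i)) = 0 := by
  classical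
  have hq : q ≤ r := by omega
  set M2 : Fin t → Fin t → A := fun k i =>
    if h : (k : ℕ) < q then x ⟨k, h⟩ (Fin.castLE htr i)
    else if he : (k : ℕ) = q then ξ (Fin.castLE htr i)
    else if h2 : (k : ℕ) ≤ q + p then
      y ⟨(k : ℕ) - q - 1, by omega⟩ (Fin.castLE htr i)
    else η (Fin.castLE htr i) with hM2
  have hD1eq : odet (fun (k : Fin r) (i : Fin r) =>
      if h : (k : ℕ) < q then x ⟨k, h⟩ i else ξ i)
      = odet (fun (m : Fin r) (i : Fin r) => rowD q r x ξ (m : ℕ) i) := rfl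
  rw [hD1eq]
  set D1 : A := odet (fun (m : Fin r) (i : Fin r) => rowD q r x ξ (m : ℕ) i) with hD1
  set qF : Fin t := ⟨q, hqt⟩ with hqF
  set M2mod : Fin (r + 1) → Fin t → Fin t → A := fun k m i =>
    if (m : ℕ) = q then rowD q r x ξ (k : ℕ) (Fin.castLE htr i) else M2 m i with hM2mod
  set coef : Fin (r + 1) → ℂ := fun k =>
    (-1 : ℂ) ^ (r + (k : ℕ) + 1) * ((r + 1 - q : ℕ) : ℂ)⁻¹ with hcoef
  -- basic commutation facts
  have hxD1 : ∀ (u : Fin q) (i0 : Fin r), Commute (x u i0) D1 := by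
    intro u i0
    apply commute_odet
    intro m i
    rw [rowD]
    by_cases h : (m : ℕ) < q
    · rw [dif_pos h]; exact hxx _ _ _ _
    · rw [dif_neg h]; exact hxξ _ _ _
  have hxDtil : ∀ (u : Fin q) (i0 : Fin r) (k : Fin (r + 1)),
      Commute (x u i0) (odet fun (m : Fin r) (i : Fin r) => rowD q r x ξ ((k.succAbove m) : ℕ) i) := by
    intro u i0 k
    apply commute_odet
    intro m i
    rw [rowD]
    by_cases h : ((k.succAbove m) : ℕ) < q
    · rw [dif_pos h]; exact hxx _ _ _ _
    · rw [dif_neg h]; exact hxξ _ _ _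
  -- members of the take / drop part
  have hTmem : ∀ (τ : Equiv.Perm (Fin t)) b, b ∈ (List.ofFn fun i => M2 i (τ i)).take q →
      ∃ (u : Fin q) (i0 : Fin r), b = x u i0 := by
    intro τ b hb
    rw [List.mem_iff_getElem] at hb
    obtain ⟨n, hn, rfl⟩ := hb
    have hn2 : n < q := by simp at hn; omega
    have hnt : n < t := by omega
    rw [List.getElem_take, List.getElem_ofFn]
    refine ⟨⟨n, hn2⟩, Fin.castLE htr (τ ⟨n, by simpa using hnt⟩), ?_⟩
    simp only [hM2]
    rw [dif_pos hn2]
  -- the key computation for each τ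
  have key : ∀ τ : Equiv.Perm (Fin t),
      D1 * (List.ofFn fun i => M2 i (τ i)).prod
        = ∑ k ∈ Finset.univ.filter (fun k : Fin (r + 1) => (k : ℕ) < q),
            coef k • ((odet fun (m : Fin r) (i : Fin r) => rowD q r x ξ ((k.succAbove m) : ℕ) i)
              * (List.ofFn fun i => M2mod k i (τ i)).prod) := by
    intro τ
    have hsplit := ofFn_prod_split (fun i => M2 i (τ i)) qF
    have hqFv : (qF : ℕ) = q := rfl
    have hMq : M2 qF (τ qF) = ξ (Fin.castLE htr (τ qF)) := by
      simp [hM2, hqF]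
    rw [hsplit, hqFv, hMq]
    set T := ((List.ofFn fun i => M2 i (τ i)).take q).prod with hT
    set B := ((List.ofFn fun i => M2 i (τ i)).drop (q + 1)).prod with hB
    have hDT : Commute D1 T := by
      apply Commute.list_prod_right
      intro b hb
      obtain ⟨u, i0, rfl⟩ := hTmem τ b hb
      exact (hxD1 u i0).symm
    have hassoc : D1 * (T * (ξ (Fin.castLE htr (τ qF)) * B))
        = T * ((D1 * ξ (Fin.castLE htr (τ qF))) * B) := by
      rw [← mul_assoc, hDT.eq, mul_assoc, ← mul_assoc D1, ← mul_assoc, mul_assoc T]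
    rw [hassoc, star_lemma q r x ξ (Fin.castLE htr (τ qF)) hxx hxξ hξξ hq]
    rw [Finset.sum_mul, Finset.mul_sum]
    apply Finset.sum_congr rfl
    intro k hk
    have hkq : (k : ℕ) < q := by simpa using hk
    rw [smul_mul_assoc, mul_smul_comm]
    congr 1
    -- T * ((Dtil k * rowD k c) * B) = Dtil k * (ofFn M2mod).prod
    have hDTil : Commute (odet fun (m : Fin r) (i : Fin r) => rowD q r x ξ ((k.succAbove m) : ℕ) i) T := by
      apply Commute.list_prod_right
      intro b hb
      obtain ⟨u, i0, rfl⟩ := hTmem τ b hb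
      exact ((hxDtil u i0 k).symm)
    have hsplit2 := ofFn_prod_split (fun i => M2mod k i (τ i)) qF
    have hMq2 : M2mod k qF (τ qF) = rowD q r x ξ (k : ℕ) (Fin.castLE htr (τ qF)) := by
      simp [hM2mod, hqF]
    have hTake : (List.ofFn fun i => M2mod k i (τ i)).take q
        = (List.ofFn fun i => M2 i (τ i)).take q := by
      apply List.ext_getElem (by simp)
      intro n hn hn'
      simp only [List.getElem_take, List.getElem_ofFn]
      have hn2 : n < q := by simp at hn; omega
      simp only [hM2mod]
      rw [if_neg (show ¬ n = q by omega)]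
    have hDrop : (List.ofFn fun i => M2mod k i (τ i)).drop (q + 1)
        = (List.ofFn fun i => M2 i (τ i)).drop (q + 1) := by
      apply List.ext_getElem (by simp)
      intro n hn hn'
      simp only [List.getElem_drop, List.getElem_ofFn]
      simp only [hM2mod]
      rw [if_neg (show ¬ (q + 1 + n) = q by omega)]
    rw [hsplit2, hqFv, hMq2, hTake, hDrop, ← hT, ← hB]
    set Dtk := odet fun (m : Fin r) (i : Fin r) => rowD q r x ξ ((k.succAbove m) : ℕ) i with hDtk
    set rk := rowD q r x ξ (k : ℕ) (Fin.castLE htr (τ qF)) with hrk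
    rw [mul_assoc Dtk rk B, ← mul_assoc T Dtk (rk * B), ← hDTil.eq, mul_assoc Dtk T (rk * B)]
  -- assemble
  rw [show odet M2 = ∑ τ : Equiv.Perm (Fin t),
      ((Equiv.Perm.sign τ : ℤ) • (List.ofFn fun i => M2 i (τ i)).prod) from rfl]
  rw [Finset.mul_sum]
  have step1 : ∀ τ : Equiv.Perm (Fin t),
      D1 * ((Equiv.Perm.sign τ : ℤ) • (List.ofFn fun i => M2 i (τ i)).prod)
        = ∑ k ∈ Finset.univ.filter (fun k : Fin (r + 1) => (k : ℕ) < q),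
            coef k • (((Equiv.Perm.sign τ : ℤ) : ℂ) •
              ((odet fun (m : Fin r) (i : Fin r) => rowD q r x ξ ((k.succAbove m) : ℕ) i)
                * (List.ofFn fun i => M2mod k i (τ i)).prod)) := by
    intro τ
    rw [mul_smul_comm, key τ, Finset.smul_sum]
    apply Finset.sum_congr rfl
    intro k _
    rw [Int.cast_smul_eq_zsmul, smul_comm]
  rw [Finset.sum_congr rfl (fun τ _ => step1 τ), Finset.sum_comm]
  apply Finset.sum_eq_zero
  intro k hk
  have hkq : (k : ℕ) < q := by simpa using hk
  have hinner : ∑ τ : Equiv.Perm (Fin t),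
      coef k • (((Equiv.Perm.sign τ : ℤ) : ℂ) •
        ((odet fun (m : Fin r) (i : Fin r) => rowD q r x ξ ((k.succAbove m) : ℕ) i)
          * (List.ofFn fun i => M2mod k i (τ i)).prod))
      = coef k • ((odet fun (m : Fin r) (i : Fin r) => rowD q r x ξ ((k.succAbove m) : ℕ) i)
          * odet (M2mod k)) := by
    rw [← Finset.smul_sum]
    congr 1
    rw [show odet (M2mod k) = ∑ τ : Equiv.Perm (Fin t),
      ((Equiv.Perm.sign τ : ℤ) • (List.ofFn fun i => M2mod k i (τ i)).prod) from rfl]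
    rw [Finset.mul_sum]
    apply Finset.sum_congr rfl
    intro τ _
    rw [Int.cast_smul_eq_zsmul, mul_smul_comm]
  rw [hinner]
  have hzero : odet (M2mod k) = 0 := by
    apply odet_eq_zero_of_row_eq (M2mod k) qF ⟨(k : ℕ), lt_trans hkq hqt⟩
    · intro heq
      have := congrArg Fin.val heq
      simp [hqF] at this
      omega
    · intro c
      have hne : ¬ ((k : ℕ) = q) := by omega
      have h1 : M2mod k qF c = rowD q r x ξ (k : ℕ) (Fin.castLE htr c) := by
        simp [hM2mod, hqF]
      have h2 : M2mod k ⟨(k : ℕ), lt_trans hkq hqt⟩ c = M2 ⟨(k : ℕ), lt_trans hkq hqt⟩ c := by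
        simp [hM2mod, hne]
      rw [h1, h2]
      have h3 : M2 ⟨(k : ℕ), lt_trans hkq hqt⟩ c = x ⟨(k : ℕ), hkq⟩ (Fin.castLE htr c) := by
        simp only [hM2]
        rw [dif_pos hkq]
      rw [h3, rowD, dif_pos hkq]
    · intro c m c'
      have hqc : M2mod k qF c = x ⟨(k : ℕ), hkq⟩ (Fin.castLE htr c) := by
        have : M2mod k qF c = rowD q r x ξ (k : ℕ) (Fin.castLE htr c) := by simp [hM2mod, hqF]
        rw [this, rowD, dif_pos hkq]
      rw [hqc]
      by_cases hmq : (m : ℕ) = q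
      · have : M2mod k m c' = x ⟨(k : ℕ), hkq⟩ (Fin.castLE htr c') := by
          simp only [hM2mod]
          rw [if_pos hmq, rowD, dif_pos hkq]
        rw [this]
        exact hxx _ _ _ _

      · have hm2 : M2mod k m c' = M2 m c' := by
          simp only [hM2mod]
          rw [if_neg hmq]
        rw [hm2]
        simp only [hM2]
        by_cases h1 : (m : ℕ) < q
        · rw [dif_pos h1]; exact hxx _ _ _ _
        rw [dif_neg h1, dif_neg hmq]
        by_cases h2 : (m : ℕ) ≤ q + p
        · rw [dif_pos h2]; exact hxy _ _ _ _
        · rw [dif_neg h2]; exact hxη _ _ _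
  rw [hzero, mul_zero, smul_zero]
end

section
/- Let R be a commutative ring, let e ∈ R satisfy e * e = e, let x, y ∈ R, and let f ∈ R[X] be a polynomial. Then f.eval (x + e * y) = f.eval x + e * (f.eval (x + y) - f.eval x). -/
open Polynomial

/-! Since `x + e y = e (x + y) + (1 - e) x` and `e`, `1 - e` are orthogonal idempotents, every
power, hence every polynomial, of `e a + (1 - e) b` splits as `e` times its value at `a` plus
`1 - e` times its value at `b`. -/

namespace IsIdempotentElem

variable {R : Type*} [CommRing R] {e : R}

theorem mul_add_one_sub_mul_pow (he : IsIdempotentElem e) (a b : R) (n : ℕ) :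
    (e * a + (1 - e) * b) ^ n = e * a ^ n + (1 - e) * b ^ n := by
  induction n with
  | zero => ring
  | succ n ih =>
    rw [pow_succ, ih]
    linear_combination (a ^ (n + 1) - a ^ n * b - a * b ^ n + b ^ (n + 1)) * he.eq

theorem eval_mul_add_one_sub_mul (he : IsIdempotentElem e) (a b : R) (f : R[X]) :
    f.eval (e * a + (1 - e) * b) = e * f.eval a + (1 - e) * f.eval b := by
  induction f using Polynomial.induction_on' with
  | add p q hp hq => simp only [eval_add, hp, hq]; ring
  | monomial n c => simp only [eval_monomial, he.mul_add_one_sub_mul_pow]; ring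

end IsIdempotentElem

/-- Lemma 3.2, first identity: `f(x + e y) = f(x) + e (f(x+y) - f(x))`
for an idempotent `e`. -/
theorem eval_add_idem_mul (R : Type*) [CommRing R] (e : R) (he : e * e = e)
    (x y : R) (f : R[X]) :
    f.eval (x + e * y) = f.eval x + e * (f.eval (x + y) - f.eval x) := by
  rw [show x + e * y = e * (x + y) + (1 - e) * x by ring,
    IsIdempotentElem.eval_mul_add_one_sub_mul he]
  ring
end
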